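/- arXiv:0805.4442 — 2 statements merged into one kernel-verified Lean document; each statement's English description precedes it below -/
import Mathlib

section
/- Let Δ be a finite-dimensional building, let α be a root of Δ with boundary wall M, let P be a panel in M, and let C be a chamber of Δ containing P and not contained in α. Then there exists an apartment Σ of Δ (in the complete apartment system) containing α ∪ {C}. -/
/-!
Common framework: simplicial buildings of type `(W,S)`.

A building of type `(W,S)` is modelled as a finite-dimensional simplicial
complex (a downward-closed set of finite sets of vertices, all of whose
simplices are contained in maximal simplices, the *chambers*, having a common
finite number `rank` of vertices), together with a Weyl distance function
`delta` on chambers satisfying the usual axioms of a `W`-metric building,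
compatible with the simplicial structure (two distinct chambers are at Weyl
distance a simple reflection iff they share a panel), and in which any two
chambers lie in a common isometrically embedded copy of `W` (an apartment).

Apartments (members of the *complete* apartment system) are the subcomplexes
generated by the chamber sets of isometric copies of `W`, which by a theorem
of Tits are exactly the subcomplexes isomorphic to the Coxeter complex
`Σ(W,S)`.
-/

namespace IntersectionsOfApartments

open Set

/-- The set of chambers of a half-apartment (root) of the Coxeter complex
`Σ(W,S)`: given a pair of adjacent chambers `w` and `w * sᵢ`, it consists of
all chambers strictly nearer to `w` than to `w * sᵢ`. -/
def IsHalfSpace {B W : Type*} [Group W] {M : CoxeterMatrix B}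
    (cs : CoxeterSystem M W) (H : Set W) : Prop :=
  ∃ (w : W) (i : B),
    H = {v : W | cs.length (w⁻¹ * v) < cs.length ((w * cs.simple i)⁻¹ * v)}

/-- A Coxeter matrix is irreducible if its Coxeter diagram is connected,
i.e. the index set cannot be split into two nonempty mutually commuting
parts. -/
def IsIrreducibleMatrix {B : Type*} (M : CoxeterMatrix B) : Prop :=
  ∀ J : Set B, J.Nonempty → Jᶜ.Nonempty → ∃ i ∈ J, ∃ j ∈ Jᶜ, M i j ≠ 2

/-- A Coxeter group is of affine type iff it is infinite and virtually
abelian (this characterizes the affine ones among the irreducible Coxeter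
groups). -/
def IsAffineCoxeterGroup (W : Type*) [Group W] : Prop :=
  Infinite W ∧ ∃ H : Subgroup W, H.FiniteIndex ∧ ∀ a ∈ H, ∀ b ∈ H, a * b = b * a

/-- A (finite-dimensional, simplicial) building of type `(W,S)` on the vertex
type `V`. -/
structure Building {B W : Type*} [Group W] {M : CoxeterMatrix B}
    (cs : CoxeterSystem M W) (V : Type*) [DecidableEq V] where
  /-- The simplices of the building. -/
  faces : Set (Finset V)
  /-- The faces of a simplex are simplices. -/
  down_closed : ∀ ⦃A C : Finset V⦄, C ∈ faces → A ⊆ C → A ∈ faces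
  /-- The number of vertices of a chamber (`= dim Δ + 1`); in particular the
  building is finite-dimensional. -/
  rank : ℕ
  rank_pos : 0 < rank
  card_le_rank : ∀ A ∈ faces, A.card ≤ rank
  /-- Every simplex is a face of a chamber. -/
  exists_chamber_superset : ∀ A ∈ faces, ∃ C ∈ faces, A ⊆ C ∧ C.card = rank
  /-- The Weyl distance function (its values on non-chambers are irrelevant). -/
  delta : Finset V → Finset V → W
  delta_eq_one_iff : ∀ ⦃C D : Finset V⦄, C ∈ faces → D ∈ faces →
    C.card = rank → D.card = rank → (delta C D = 1 ↔ C = D)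
  delta_inv : ∀ C D : Finset V, delta D C = (delta C D)⁻¹
  /-- Two chambers are at Weyl distance a simple reflection iff they are
  distinct and share a panel (compatibility of the `W`-metric and the
  simplicial structures). -/
  delta_simple_iff : ∀ ⦃C D : Finset V⦄, C ∈ faces → D ∈ faces →
    C.card = rank → D.card = rank →
    ((∃ i : B, delta C D = cs.simple i) ↔ (C ≠ D ∧ (C ∩ D).card + 1 = rank))
  delta_triangle : ∀ ⦃C D E : Finset V⦄, C ∈ faces → D ∈ faces → E ∈ faces →
    C.card = rank → D.card = rank → E.card = rank →
    ∀ i : B, delta D E = cs.simple i →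
    delta C E = delta C D ∨ delta C E = delta C D * cs.simple i
  delta_mul_simple : ∀ ⦃C D E : Finset V⦄, C ∈ faces → D ∈ faces → E ∈ faces →
    C.card = rank → D.card = rank → E.card = rank →
    ∀ i : B, delta D E = cs.simple i →
    cs.length (delta C D * cs.simple i) = cs.length (delta C D) + 1 →
    delta C E = delta C D * cs.simple i
  exists_delta_simple : ∀ ⦃C : Finset V⦄, C ∈ faces → C.card = rank →
    ∀ i : B, ∃ D ∈ faces, D.card = rank ∧ delta C D = cs.simple i
  /-- Any two chambers lie in a common apartment: there is an isometrically
  embedded copy of `W` containing both. -/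
  pair_in_apartment : ∀ ⦃C D : Finset V⦄, C ∈ faces → D ∈ faces →
    C.card = rank → D.card = rank →
    ∃ f : W → Finset V, (∀ w, f w ∈ faces ∧ (f w).card = rank) ∧
      (∀ u v : W, delta (f u) (f v) = u⁻¹ * v) ∧ (∃ u, f u = C) ∧ (∃ v, f v = D)

namespace Building

variable {B W V : Type*} [Group W] [DecidableEq V] {M : CoxeterMatrix B}
  {cs : CoxeterSystem M W}

/-- The chambers: the simplices with the maximal number `rank` of vertices. -/
def chambers (Δ : Building cs V) : Set (Finset V) :=
  {C ∈ Δ.faces | C.card = Δ.rank}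

/-- The panels: the codimension-one simplices. -/
def IsPanel (Δ : Building cs V) (P : Finset V) : Prop :=
  P ∈ Δ.faces ∧ P.card + 1 = Δ.rank

/-- Two chambers are adjacent if they are distinct and share a common panel. -/
def Adjacent (Δ : Building cs V) (C D : Finset V) : Prop :=
  C ∈ Δ.chambers ∧ D ∈ Δ.chambers ∧ C ≠ D ∧ (C ∩ D).card + 1 = Δ.rank

/-- The gallery distance between two chambers. -/
noncomputable def dist (Δ : Building cs V) (C D : Finset V) : ℕ :=
  cs.length (Δ.delta C D)

/-- A gallery: a nonempty sequence of chambers in which consecutive members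
are adjacent. -/
def IsGallery (Δ : Building cs V) (l : List (Finset V)) : Prop :=
  l ≠ [] ∧ (∀ C ∈ l, C ∈ Δ.chambers) ∧ l.Chain' Δ.Adjacent

/-- A gallery from `C` to `D`. -/
def IsGalleryFromTo (Δ : Building cs V) (C D : Finset V)
    (l : List (Finset V)) : Prop :=
  Δ.IsGallery l ∧ l.head? = some C ∧ l.getLast? = some D

/-- A minimal gallery from `C` to `D`: a gallery whose length realizes the
gallery distance. -/
def IsMinimalGallery (Δ : Building cs V) (C D : Finset V)
    (l : List (Finset V)) : Prop :=
  Δ.IsGalleryFromTo C D l ∧ l.length = Δ.dist C D + 1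

/-- A set of chambers is convex if it contains every chamber on every minimal
gallery between two of its members. -/
def IsConvexChamberSet (Δ : Building cs V) (K : Set (Finset V)) : Prop :=
  K ⊆ Δ.chambers ∧
    ∀ C ∈ K, ∀ D ∈ K, ∀ l, Δ.IsMinimalGallery C D l → ∀ E ∈ l, E ∈ K

/-- A subcomplex: a downward-closed set of simplices of the building. -/
def IsSubcomplex (Δ : Building cs V) (κ : Set (Finset V)) : Prop :=
  κ ⊆ Δ.faces ∧ ∀ ⦃A C : Finset V⦄, C ∈ κ → A ⊆ C → A ∈ κ

/-- The chambers of a set of simplices. -/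
def Ch (Δ : Building cs V) (κ : Set (Finset V)) : Set (Finset V) :=
  κ ∩ Δ.chambers

/-- A chamber subcomplex: a subcomplex each of whose simplices is contained
in some chamber (of the building) belonging to the subcomplex. -/
def IsChamberSubcomplex (Δ : Building cs V) (κ : Set (Finset V)) : Prop :=
  Δ.IsSubcomplex κ ∧ ∀ A ∈ κ, ∃ C ∈ Δ.Ch κ, A ⊆ C

/-- A convex chamber subcomplex: a chamber subcomplex whose set of chambers is
convex (i.e. closed under minimal galleries). -/
def IsConvexChamberSubcomplex (Δ : Building cs V) (κ : Set (Finset V)) : Prop :=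
  Δ.IsChamberSubcomplex κ ∧ Δ.IsConvexChamberSet (Δ.Ch κ)

/-- A convex subcomplex: an intersection of (a nonempty family of) convex
chamber subcomplexes. -/
def IsConvexSubcomplex (Δ : Building cs V) (κ : Set (Finset V)) : Prop :=
  ∃ 𝒦 : Set (Set (Finset V)), 𝒦.Nonempty ∧
    (∀ μ ∈ 𝒦, Δ.IsConvexChamberSubcomplex μ) ∧ κ = ⋂₀ 𝒦

/-- The convex closure (convex hull) of a set of simplices: the intersection
of all convex subcomplexes containing it. -/
def convexClosure (Δ : Building cs V) (S : Set (Finset V)) : Set (Finset V) :=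
  ⋂₀ {κ : Set (Finset V) | Δ.IsConvexSubcomplex κ ∧ S ⊆ κ}

/-- Thickness: every panel lies in at least three chambers. -/
def Thick (Δ : Building cs V) : Prop :=
  ∀ P : Finset V, Δ.IsPanel P →
    ∃ T : Finset (Finset V), 3 ≤ T.card ∧
      ↑T ⊆ {C : Finset V | C ∈ Δ.chambers ∧ P ⊆ C}

/-- Every panel lies in at least four chambers. -/
def FourChambersPerPanel (Δ : Building cs V) : Prop :=
  ∀ P : Finset V, Δ.IsPanel P →
    ∃ T : Finset (Finset V), 4 ≤ T.card ∧
      ↑T ⊆ {C : Finset V | C ∈ Δ.chambers ∧ P ⊆ C}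

/-- An isometric embedding of `W` into the chamber set of the building; its
image is the chamber set of an apartment. -/
def IsIsometry (Δ : Building cs V) (f : W → Finset V) : Prop :=
  (∀ w : W, f w ∈ Δ.chambers) ∧ ∀ u v : W, Δ.delta (f u) (f v) = u⁻¹ * v

/-- The subcomplex generated by the chambers `f w`, `w ∈ H`. -/
def genBy (Δ : Building cs V) (f : W → Finset V) (H : Set W) :
    Set (Finset V) :=
  {A : Finset V | ∃ w ∈ H, A ⊆ f w}

/-- The subcomplex generated by the image of `f : W → Finset V`. -/
def aptOf (Δ : Building cs V) (f : W → Finset V) : Set (Finset V) :=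
  Δ.genBy f Set.univ

/-- An apartment (member of the *complete* apartment system): the subcomplex
generated by an isometrically embedded copy of `W`; equivalently, a
subcomplex isomorphic to the Coxeter complex `Σ(W,S)`. -/
def IsApartment (Δ : Building cs V) (Ω : Set (Finset V)) : Prop :=
  ∃ f : W → Finset V, Δ.IsIsometry f ∧ Ω = Δ.aptOf f

/-- An apartment system: a family of apartments such that any two chambers of
the building lie in a common member. -/
def IsApartmentSystem (Δ : Building cs V) (𝒜 : Set (Set (Finset V))) : Prop :=
  (∀ Ω ∈ 𝒜, Δ.IsApartment Ω) ∧
    ∀ C ∈ Δ.chambers, ∀ D ∈ Δ.chambers, ∃ Ω ∈ 𝒜, C ∈ Ω ∧ D ∈ Ω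

/-- `α` is a root of the building with boundary wall `Mw`: in some apartment
(given by an isometry `f`), `α` is the subcomplex generated by the chambers of
a half-space `H`, and `Mw = α ∩ (-α)` is the intersection of `α` with the
opposite root. -/
def IsRootWithWall (Δ : Building cs V) (α Mw : Set (Finset V)) : Prop :=
  ∃ (f : W → Finset V) (H : Set W), Δ.IsIsometry f ∧ IsHalfSpace cs H ∧
    α = Δ.genBy f H ∧ Mw = Δ.genBy f H ∩ Δ.genBy f Hᶜ

/-- A root of the building. -/
def IsRoot (Δ : Building cs V) (α : Set (Finset V)) : Prop :=
  ∃ Mw, Δ.IsRootWithWall α Mw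

/-- A wall of the building: the boundary `α ∩ (-α)` of a root `α`. -/
def IsWall (Δ : Building cs V) (Mw : Set (Finset V)) : Prop :=
  ∃ α, Δ.IsRootWithWall α Mw

/-- `Mw` is a wall of the apartment `Ω`. -/
def IsWallIn (Δ : Building cs V) (Ω Mw : Set (Finset V)) : Prop :=
  ∃ (f : W → Finset V) (H : Set W), Δ.IsIsometry f ∧ IsHalfSpace cs H ∧
    Ω = Δ.aptOf f ∧ Mw = Δ.genBy f H ∩ Δ.genBy f Hᶜ

/-- The link of a simplex `A`. -/
def link (Δ : Building cs V) (A : Finset V) : Set (Finset V) :=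
  {Bf ∈ Δ.faces | A ∩ Bf = ∅ ∧ A ∪ Bf ∈ Δ.faces}

/-- An apartment of the building `Lk_Δ(A)` (with its complete apartment
system): these are exactly the links `Lk_Σ(A)` of `A` in the apartments `Σ` of
`Δ` containing `A`. -/
def IsApartmentOfLink (Δ : Building cs V) (A : Finset V)
    (ApA : Set (Finset V)) : Prop :=
  ∃ Ω, Δ.IsApartment Ω ∧ A ∈ Ω ∧
    ApA = {Bf ∈ Δ.link A | A ∪ Bf ∈ Ω}

end Building

section SignRep

open scoped Classical

variable {B W : Type*} [Group W] {M : CoxeterMatrix B} (cs : CoxeterSystem M W)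

private lemma conj_conj (i : B) (w : W) :
    cs.simple i * (cs.simple i * w * cs.simple i) * cs.simple i = w := by
  rw [← mul_assoc, ← mul_assoc, cs.simple_mul_simple_self, one_mul, mul_assoc,
    cs.simple_mul_simple_self, mul_one]

private lemma simple_cube (i : B) : cs.simple i * cs.simple i * cs.simple i = cs.simple i := by
  rw [cs.simple_mul_simple_self, one_mul]

private lemma conj_eq_simple_iff (i : B) (w : W) :
    cs.simple i * w * cs.simple i = cs.simple i ↔ w = cs.simple i := by
  constructor
  · intro h
    have h2 := congrArg (fun x => cs.simple i * x * cs.simple i) h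
    rw [conj_conj] at h2
    rw [h2, simple_cube]
  · rintro rfl
    exact simple_cube cs i

private noncomputable def sgnFun (i : B) : W × ℤˣ → W × ℤˣ :=
  fun p => ⟨cs.simple i * p.1 * cs.simple i, if p.1 = cs.simple i then -p.2 else p.2⟩

private lemma sgnFun_invol (i : B) : Function.Involutive (sgnFun cs i) := by
  intro p
  unfold sgnFun
  by_cases h : p.1 = cs.simple i
  · simp only [if_pos h, conj_eq_simple_iff, if_pos h, neg_neg, h, simple_cube, if_true]
    exact Prod.ext h.symm rfl
  · simp only [if_neg h, if_neg ((conj_eq_simple_iff cs i p.1).not.mpr h), conj_conj]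

private noncomputable def sgnPerm (i : B) : Equiv.Perm (W × ℤˣ) := (sgnFun_invol cs i).toPerm

private lemma sgnPerm_apply (i : B) (p : W × ℤˣ) :
    sgnPerm cs i p = ⟨cs.simple i * p.1 * cs.simple i,
      if p.1 = cs.simple i then -p.2 else p.2⟩ := rfl

section Braid

variable (i i' : B)

private lemma conj_eq_iff (z w y : W) : z * w * z⁻¹ = y ↔ w = z⁻¹ * y * z := by
  constructor
  · rintro rfl; group
  · rintro rfl; group

private lemma zsz : (cs.simple i * cs.simple i') * cs.simple i' * (cs.simple i * cs.simple i')
    = cs.simple i' := by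
  have h1 : (cs.simple i * cs.simple i') * cs.simple i' = cs.simple i := by
    rw [mul_assoc, cs.simple_mul_simple_self, mul_one]
  rw [h1, ← mul_assoc, cs.simple_mul_simple_self, one_mul]

private lemma simple_z_comm :
    cs.simple i' * (cs.simple i * cs.simple i')
      = (cs.simple i * cs.simple i')⁻¹ * cs.simple i' := by
  set z := cs.simple i * cs.simple i' with hz
  calc cs.simple i' * z = z⁻¹ * (z * cs.simple i' * z) := by group
    _ = z⁻¹ * cs.simple i' := by rw [zsz]

private noncomputable def trig (k : ℕ) (w : W) : ℤˣ :=
  if w = ((cs.simple i * cs.simple i') ^ k)⁻¹ * cs.simple i' then -1 else 1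

private lemma trig_conj (k : ℕ) (w : W) :
    trig cs i i' k ((cs.simple i * cs.simple i') * w * (cs.simple i * cs.simple i')⁻¹)
      = trig cs i i' (k + 2) w := by
  set z := cs.simple i * cs.simple i' with hz
  have key : z⁻¹ * ((z ^ k)⁻¹ * cs.simple i') * z = (z ^ (k + 2))⁻¹ * cs.simple i' := by
    calc z⁻¹ * ((z ^ k)⁻¹ * cs.simple i') * z
        = z⁻¹ * (z ^ k)⁻¹ * (cs.simple i' * z) := by group
      _ = z⁻¹ * (z ^ k)⁻¹ * (z⁻¹ * cs.simple i') := by rw [simple_z_comm cs i i', ← hz]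
      _ = (z ^ (k + 2))⁻¹ * cs.simple i' := by group
  unfold trig
  rw [conj_eq_iff, key]

private lemma conj_mul_conj (a b x : W) : a * (b * x * b⁻¹) * a⁻¹ = (a * b) * x * (a * b)⁻¹ := by
  group

private lemma sandwich_eq_iff (a b c w : W) : a * w * b = c ↔ w = a⁻¹ * c * b⁻¹ := by
  constructor
  · intro h; rw [← h]; group
  · rintro rfl; group

private lemma sgn_step (p : W × ℤˣ) :
    (sgnPerm cs i * sgnPerm cs i') p
      = ⟨(cs.simple i * cs.simple i') * p.1 * (cs.simple i * cs.simple i')⁻¹,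
          p.2 * (trig cs i i' 0 p.1 * trig cs i i' 1 p.1)⟩ := by
  rw [Equiv.Perm.mul_apply, sgnPerm_apply, sgnPerm_apply]
  have hc0 : (p.1 = cs.simple i')
      ↔ (p.1 = ((cs.simple i * cs.simple i') ^ 0)⁻¹ * cs.simple i') := by
    rw [pow_zero, inv_one, one_mul]
  have hc1 : (cs.simple i' * p.1 * cs.simple i' = cs.simple i)
      ↔ (p.1 = ((cs.simple i * cs.simple i') ^ 1)⁻¹ * cs.simple i') := by
    rw [sandwich_eq_iff, pow_one, mul_inv_rev, cs.inv_simple, cs.inv_simple]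
  have hfst : cs.simple i * (cs.simple i' * p.1 * cs.simple i') * cs.simple i
      = (cs.simple i * cs.simple i') * p.1 * (cs.simple i * cs.simple i')⁻¹ := by
    rw [mul_inv_rev, cs.inv_simple, cs.inv_simple]
    group
  simp only [hfst]
  refine Prod.ext rfl ?_
  simp only [hc0, hc1]
  unfold trig
  by_cases h0 : p.1 = ((cs.simple i * cs.simple i') ^ 0)⁻¹ * cs.simple i'
  · by_cases h1 : p.1 = ((cs.simple i * cs.simple i') ^ 1)⁻¹ * cs.simple i'
    · simp [h0, h1]
    · simp [h0, h1]
  · by_cases h1 : p.1 = ((cs.simple i * cs.simple i') ^ 1)⁻¹ * cs.simple i'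
    · simp [h0, h1]
    · simp [h0, h1]

private lemma sgn_pow (n : ℕ) (p : W × ℤˣ) :
    ((sgnPerm cs i * sgnPerm cs i') ^ n) p
      = ⟨(cs.simple i * cs.simple i') ^ n * p.1 * ((cs.simple i * cs.simple i') ^ n)⁻¹,
          p.2 * ∏ k ∈ Finset.range (2 * n), trig cs i i' k p.1⟩ := by
  induction n generalizing p with
  | zero => simp
  | succ n ih =>
    rw [pow_succ, Equiv.Perm.mul_apply, sgn_step, ih]
    refine Prod.ext ?_ ?_
    · show (cs.simple i * cs.simple i') ^ n * ((cs.simple i * cs.simple i') * p.1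
        * (cs.simple i * cs.simple i')⁻¹) * ((cs.simple i * cs.simple i') ^ n)⁻¹ = _
      rw [conj_mul_conj, ← pow_succ]
    · show (p.2 * (trig cs i i' 0 p.1 * trig cs i i' 1 p.1)) * ∏ k ∈ Finset.range (2 * n),
        trig cs i i' k ((cs.simple i * cs.simple i') * p.1 * (cs.simple i * cs.simple i')⁻¹) = _
    
      have hshift : ∏ k ∈ Finset.range (2 * n),
          trig cs i i' k ((cs.simple i * cs.simple i') * p.1 * (cs.simple i * cs.simple i')⁻¹)
          = ∏ k ∈ Finset.range (2 * n), trig cs i i' (2 + k) p.1 := by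
        refine Finset.prod_congr rfl fun k _ => ?_
        rw [trig_conj, Nat.add_comm]
      rw [hshift]
      have h2 : 2 * (n + 1) = 2 + 2 * n := by ring
      rw [h2, Finset.prod_range_add]
      have h3 : ∏ k ∈ Finset.range 2, trig cs i i' k p.1
          = trig cs i i' 0 p.1 * trig cs i i' 1 p.1 := by
        rw [Finset.prod_range_succ, Finset.prod_range_one]
      rw [h3, mul_assoc]

private lemma sgnPerm_braid : (sgnPerm cs i * sgnPerm cs i') ^ M i i' = 1 := by
  apply Equiv.ext
  intro p
  rw [sgn_pow, cs.simple_mul_simple_pow i i']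
  have hprod : ∏ k ∈ Finset.range (2 * M i i'), trig cs i i' k p.1 = 1 := by
    have h2 : 2 * M i i' = M i i' + M i i' := by ring
    rw [h2, Finset.prod_range_add]
    have heq : ∀ k, trig cs i i' (M i i' + k) p.1 = trig cs i i' k p.1 := by
      intro k
      unfold trig
      rw [pow_add, cs.simple_mul_simple_pow i i', one_mul]
    simp only [heq]
    exact Int.units_mul_self _
  rw [hprod, mul_one, inv_one, one_mul, mul_one]
  rfl

end Braid

private lemma sgnPerm_liftable : M.IsLiftable (sgnPerm cs) := fun i i' => sgnPerm_braid cs i i'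

private noncomputable def theta : W →* Equiv.Perm (W × ℤˣ) :=
  cs.lift ⟨sgnPerm cs, sgnPerm_liftable cs⟩

private lemma theta_simple (i : B) : theta cs (cs.simple i) = sgnPerm cs i :=
  cs.lift_apply_simple (sgnPerm_liftable cs) i


private lemma theta_apply : ∀ (w t : W) (ε : ℤˣ),
    theta cs w (t, ε) = (w * t * w⁻¹, ε * (theta cs w (t, 1)).2) := by
  have main : ∀ (ω : List B) (t : W) (ε : ℤˣ),
      theta cs (cs.wordProd ω) (t, ε)
        = (cs.wordProd ω * t * (cs.wordProd ω)⁻¹, ε * (theta cs (cs.wordProd ω) (t, 1)).2) := by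
    intro ω
    induction ω with
    | nil =>
      intro t ε
      simp [cs.wordProd_nil]
    | cons i ω ih =>
      intro t ε
      rw [cs.wordProd_cons, map_mul, Equiv.Perm.mul_apply, Equiv.Perm.mul_apply,
        ih t ε, ih t 1, theta_simple, sgnPerm_apply, sgnPerm_apply]
      simp only [one_mul]
      refine Prod.ext ?_ ?_
      · show cs.simple i * (cs.wordProd ω * t * (cs.wordProd ω)⁻¹) * cs.simple i = _
        rw [mul_inv_rev, cs.inv_simple]
        group
      · by_cases h : cs.wordProd ω * t * (cs.wordProd ω)⁻¹ = cs.simple i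
        · simp only [if_pos h]
          rw [mul_neg]
        · simp only [if_neg h]
  intro w t ε
  obtain ⟨ω, rfl⟩ := cs.wordProd_surjective w
  exact main ω t ε

private lemma theta_count [DecidableEq W] : ∀ (ω : List B) (t : W),
    (theta cs (cs.wordProd ω) (t, 1)).2 = (-1 : ℤˣ) ^ (List.count t (cs.rightInvSeq ω)) := by
  intro ω
  induction ω with
  | nil =>
    intro t
    simp [cs.wordProd_nil]
  | cons i ω ih =>
    intro t
    have hs : theta cs (cs.wordProd (i :: ω)) (t, 1)
        = sgnPerm cs i (theta cs (cs.wordProd ω) (t, 1)) := by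
      rw [cs.wordProd_cons, map_mul, Equiv.Perm.mul_apply, theta_simple]
    have hfst : (theta cs (cs.wordProd ω) (t, 1)).1
        = cs.wordProd ω * t * (cs.wordProd ω)⁻¹ := by
      rw [theta_apply]
    have hcond : ((theta cs (cs.wordProd ω) (t, 1)).1 = cs.simple i)
        ↔ (t = (cs.wordProd ω)⁻¹ * cs.simple i * cs.wordProd ω) := by
      rw [hfst, sandwich_eq_iff, inv_inv]
    rw [hs, sgnPerm_apply]
    rw [show cs.rightInvSeq (i :: ω)
      = ((cs.wordProd ω)⁻¹ * cs.simple i * cs.wordProd ω) :: cs.rightInvSeq ω from rfl]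
    rw [List.count_cons]
    by_cases h : t = (cs.wordProd ω)⁻¹ * cs.simple i * cs.wordProd ω
    · rw [if_pos (hcond.mpr h)]
      show -(theta cs (cs.wordProd ω) (t, 1)).2 = _
      rw [if_pos (beq_iff_eq.mpr h.symm), ih t, pow_add, pow_one, mul_neg_one]
    · rw [if_neg (fun hc => h (hcond.mp hc))]
      show (theta cs (cs.wordProd ω) (t, 1)).2 = _
      rw [if_neg (fun hc => h (beq_iff_eq.mp hc).symm), add_zero, ih t]

private lemma theta_eq_one_of_not_inversion (w t : W)
    (h : ¬ cs.length (w * t) < cs.length w) : (theta cs w (t, 1)).2 = 1 := by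
  classical
  obtain ⟨ω, hred, hω⟩ := cs.exists_reduced_word' w
  subst hω
  rw [theta_count]
  have hmem : t ∉ cs.rightInvSeq ω := by
    intro hmem
    exact h (cs.isRightInversion_of_mem_rightInvSeq hred hmem).2
  rw [List.count_eq_zero_of_not_mem hmem, pow_zero]

private lemma theta_self (t : W) (ht : cs.IsReflection t) : theta cs t (t, 1) = (t, -1) := by
  obtain ⟨q, c, rfl⟩ := ht
  have hfix : q⁻¹ * (q * cs.simple c * q⁻¹) * q⁻¹⁻¹ = cs.simple c := by group
  obtain ⟨σ₁, hσ₁⟩ : ∃ σ, theta cs q⁻¹ (q * cs.simple c * q⁻¹, 1) = (cs.simple c, σ) :=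
    ⟨_, Prod.ext (by rw [theta_apply]; exact hfix) rfl⟩
  have h3 : theta cs (cs.simple c) (cs.simple c, σ₁) = (cs.simple c, -σ₁) := by
    rw [theta_simple, sgnPerm_apply]
    exact Prod.ext (simple_cube cs c) (by simp)
  have hone : theta cs q (cs.simple c, σ₁)
      = (q * cs.simple c * q⁻¹, σ₁ * (theta cs q (cs.simple c, 1)).2) :=
    theta_apply cs q (cs.simple c) σ₁
  have hneg : theta cs q (cs.simple c, -σ₁)
      = (q * cs.simple c * q⁻¹, -σ₁ * (theta cs q (cs.simple c, 1)).2) :=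
    theta_apply cs q (cs.simple c) (-σ₁)
  have hid : σ₁ * (theta cs q (cs.simple c, 1)).2 = 1 := by
    have hcomp : theta cs q (theta cs q⁻¹ (q * cs.simple c * q⁻¹, 1))
        = (q * cs.simple c * q⁻¹, 1) := by
      rw [← Equiv.Perm.mul_apply, ← map_mul, mul_inv_cancel, map_one, Equiv.Perm.one_apply]
    rw [hσ₁, hone] at hcomp
    exact congrArg Prod.snd hcomp
  have hA : theta cs (q * cs.simple c * q⁻¹) (q * cs.simple c * q⁻¹, 1)
      = theta cs q (theta cs (cs.simple c) (theta cs q⁻¹ (q * cs.simple c * q⁻¹, 1))) := by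
    rw [← Equiv.Perm.mul_apply, ← Equiv.Perm.mul_apply, ← map_mul, ← map_mul]
  rw [hA, hσ₁, h3, hneg]
  refine Prod.ext rfl ?_
  show -σ₁ * (theta cs q (cs.simple c, 1)).2 = -1
  rw [neg_mul, hid]

private lemma theta_neg_of_inversion (w t : W) (ht : cs.IsReflection t)
    (h : cs.length (w * t) < cs.length w) : (theta cs w (t, 1)).2 = -1 := by
  have hnot : ¬ cs.length ((w * t) * t) < cs.length (w * t) := by
    rw [mul_assoc, ht.mul_self, mul_one]
    omega
  have h1 : (theta cs (w * t) (t, 1)).2 = 1 := theta_eq_one_of_not_inversion cs (w * t) t hnot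
  have h2 : theta cs w (t, 1) = theta cs (w * t) (t, -1) := by
    rw [← theta_self cs t ht, ← Equiv.Perm.mul_apply, ← map_mul, mul_assoc, ht.mul_self, mul_one]
  rw [h2, theta_apply cs (w * t) t (-1)]
  show (-1 : ℤˣ) * (theta cs (w * t) (t, 1)).2 = -1
  rw [h1, mul_one]

/-- The lifting lemma: if `ℓ(s_r u) = ℓ(u) + 1`, `ℓ(u s_j) = ℓ(u) + 1` and
`ℓ(s_r u s_j) = ℓ(u)`, then `s_r u = u s_j`. -/
private lemma lifting (r j : B) (u : W)
    (h1 : cs.length (cs.simple r * u) = cs.length u + 1)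
    (h2 : cs.length (u * cs.simple j) = cs.length u + 1)
    (h3 : cs.length (cs.simple r * u * cs.simple j) = cs.length u) :
    cs.simple r * u = u * cs.simple j := by
  classical
  have hS : (theta cs (cs.simple r * u) (cs.simple j, 1)).2 = -1 := by
    apply theta_neg_of_inversion cs _ _ (cs.isReflection_simple j)
    rw [h3, h1]
    omega
  obtain ⟨ω, hred, hω⟩ := cs.exists_reduced_word' u
  have hπ : cs.wordProd (r :: ω) = cs.simple r * u := by rw [cs.wordProd_cons, ← hω]
  have hmem : cs.simple j ∈ cs.rightInvSeq (r :: ω) := by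
    by_contra hmem
    rw [← hπ, theta_count, List.count_eq_zero_of_not_mem hmem, pow_zero] at hS
    exact absurd hS (by decide)
  rw [show cs.rightInvSeq (r :: ω)
      = ((cs.wordProd ω)⁻¹ * cs.simple r * cs.wordProd ω) :: cs.rightInvSeq ω from rfl,
    List.mem_cons] at hmem
  rcases hmem with heq | hmem
  · rw [← hω] at heq
    rw [heq]
    group
  · exfalso
    have := (cs.isRightInversion_of_mem_rightInvSeq hred hmem).2
    rw [← hω] at this
    omega

/-- If `h` and `u` are both on the positive side of the wall of the reflection `t`,
and `u s_j = t u` is the chamber adjacent to `u` across the wall of `t`, then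
`u s_j` is farther from `h` than `u` is. -/
private lemma key_refl (n : ℕ) : ∀ (t h u : W) (j : B), cs.IsReflection t →
    cs.length h = n →
    cs.length h < cs.length (t * h) → cs.length u < cs.length (t * u) →
    t * u = u * cs.simple j →
    cs.length (h⁻¹ * u * cs.simple j) = cs.length (h⁻¹ * u) + 1 := by
  induction n using Nat.strong_induction_on with
  | _ n ih =>
  intro t h u j ht hn hth htu htuj
  have husj : cs.length (u * cs.simple j) = cs.length u + 1 := by
    rcases cs.length_mul_simple u j with hc | hc
    · exact hc
    · rw [← htuj] at hc; omega
  by_cases hh : h = 1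
  · subst hh
    simpa using husj
  · obtain ⟨r, hr⟩ := cs.exists_leftDescent_of_ne_one hh
    have hr' : cs.length (cs.simple r * h) < cs.length h := hr
    have hh₁len : cs.length (cs.simple r * h) + 1 = cs.length h := by
      rcases cs.length_simple_mul h r with hc | hc
      · omega
      · exact hc
    set h₁ := cs.simple r * h with hh₁
    set t' := cs.simple r * t * cs.simple r with ht'def
    set u' := cs.simple r * u with hu'
    have ht' : cs.IsReflection t' := by
      have := ht.conj (cs.simple r)
      rwa [cs.inv_simple] at this
    have e1 : t' * h₁ = cs.simple r * (t * h) := by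
      rw [ht'def, hh₁]
      rw [mul_assoc (cs.simple r * t) (cs.simple r) (cs.simple r * h),
        cs.simple_mul_simple_cancel_left, mul_assoc]
    have hyp1' : cs.length h₁ < cs.length (t' * h₁) := by
      rw [e1]
      have hb : cs.length h < cs.length (t * h) := hth
      rcases cs.length_simple_mul (t * h) r with hc | hc <;> omega
    have e2 : t' * u' = u' * cs.simple j := by
      rw [ht'def, hu']
      rw [mul_assoc (cs.simple r * t) (cs.simple r) (cs.simple r * u),
        cs.simple_mul_simple_cancel_left, mul_assoc, htuj, ← mul_assoc]
    have hyp2' : cs.length u' < cs.length (t' * u') := by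
      rw [e2, hu']
      have hglobal : cs.length u + 1 ≤ cs.length (cs.simple r * (u * cs.simple j)) + 2 := by
        rcases cs.length_simple_mul (u * cs.simple j) r with hc | hc <;> omega
      have hassoc : cs.simple r * (u * cs.simple j) = cs.simple r * u * cs.simple j := by
        rw [mul_assoc]
      rcases cs.length_mul_simple (cs.simple r * u) j with hc | hc
      · omega
      · -- ℓ(s_r u s_j) + 1 = ℓ(s_r u)
        rcases cs.length_simple_mul u r with hd | hd
        · -- ℓ(s_r u) = ℓ u + 1, so ℓ(s_r u s_j) = ℓ u : lifting configuration
          exfalso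
          have hlift := lifting cs r j u hd husj (by omega)
          rw [← htuj] at hlift
          have hrt : cs.simple r = t := mul_right_cancel hlift
          have : cs.length h < cs.length h₁ := by
            rw [hh₁, hrt]
            exact hth
          omega
        · -- ℓ(s_r u) + 1 = ℓ u
          rw [hassoc] at hglobal
          omega
    have hIH := ih (cs.length h₁) (by omega) t' h₁ u' j ht' rfl hyp1' hyp2' e2
    have e3 : h₁⁻¹ * u' = h⁻¹ * u := by
      rw [hh₁, hu', mul_inv_rev, cs.inv_simple, mul_assoc, cs.simple_mul_simple_cancel_left]
    rwa [e3] at hIH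

end SignRep

section BuildingAux

variable {B W V : Type*} [Group W] [DecidableEq V] {M : CoxeterMatrix B}
  {cs : CoxeterSystem M W} (Δ : Building cs V)

private lemma delta_self {X : Finset V} (hX : X ∈ Δ.chambers) : Δ.delta X X = 1 :=
  (Δ.delta_eq_one_iff hX.1 hX.1 hX.2 hX.2).mpr rfl

private lemma exists_step {X Y : Finset V} (hX : X ∈ Δ.chambers) (hY : Y ∈ Δ.chambers) (r : B) :
    ∃ Z ∈ Δ.chambers, Δ.delta Y Z = cs.simple r ∧ Δ.delta X Z = Δ.delta X Y * cs.simple r := by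
  obtain ⟨g, hg, hgd, ⟨a, ha⟩, ⟨b, hb⟩⟩ := Δ.pair_in_apartment hX.1 hY.1 hX.2 hY.2
  refine ⟨g (b * cs.simple r), ⟨(hg _).1, (hg _).2⟩, ?_, ?_⟩
  · rw [← hb, hgd, inv_mul_cancel_left]
  · rw [← ha, ← hb, hgd, hgd, ← mul_assoc]

private lemma exists_step_left {X Y : Finset V} (hX : X ∈ Δ.chambers) (hY : Y ∈ Δ.chambers)
    (r : B) :
    ∃ Z ∈ Δ.chambers, Δ.delta X Z = cs.simple r
      ∧ Δ.delta Z Y = cs.simple r * Δ.delta X Y := by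
  obtain ⟨g, hg, hgd, ⟨a, ha⟩, ⟨b, hb⟩⟩ := Δ.pair_in_apartment hX.1 hY.1 hX.2 hY.2
  refine ⟨g (a * cs.simple r), ⟨(hg _).1, (hg _).2⟩, ?_, ?_⟩
  · rw [← ha, hgd, inv_mul_cancel_left]
  · rw [← ha, ← hb, hgd, hgd, mul_inv_rev, cs.inv_simple, mul_assoc]

private lemma lip : ∀ (n : ℕ) {A X Y : Finset V}, A ∈ Δ.chambers → X ∈ Δ.chambers →
    Y ∈ Δ.chambers → cs.length (Δ.delta X Y) = n →
    cs.length ((Δ.delta A X)⁻¹ * Δ.delta A Y) ≤ n := by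
  intro n
  induction n using Nat.strong_induction_on with
  | _ n ih =>
  intro A X Y hA hX hY hlen
  rcases Nat.eq_zero_or_pos n with h0 | hpos
  · subst h0
    have h1 : Δ.delta X Y = 1 := cs.length_eq_zero_iff.mp hlen
    have hXY : X = Y := (Δ.delta_eq_one_iff hX.1 hY.1 hX.2 hY.2).mp h1
    subst hXY
    rw [inv_mul_cancel, cs.length_one]
  · have hne : Δ.delta X Y ≠ 1 := by
      intro h; rw [h, cs.length_one] at hlen; omega
    obtain ⟨r, hr⟩ := cs.exists_leftDescent_of_ne_one hne
    obtain ⟨Z, hZ, hXZ, hZY⟩ := exists_step_left Δ hX hY r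
    have hr' : cs.length (cs.simple r * Δ.delta X Y) < cs.length (Δ.delta X Y) := hr
    have hlen' : cs.length (Δ.delta Z Y) = n - 1 := by
      rw [hZY]
      rcases cs.length_simple_mul (Δ.delta X Y) r with hc | hc <;> omega
    have h1 : cs.length ((Δ.delta A X)⁻¹ * Δ.delta A Z) ≤ 1 := by
      rcases Δ.delta_triangle hA.1 hX.1 hZ.1 hA.2 hX.2 hZ.2 r hXZ with hc | hc
      · rw [hc, inv_mul_cancel, cs.length_one]; omega
      · rw [hc, inv_mul_cancel_left, cs.length_simple]
    have h2 := ih (n - 1) (by omega) hA hZ hY hlen'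
    calc cs.length ((Δ.delta A X)⁻¹ * Δ.delta A Y)
        = cs.length (((Δ.delta A X)⁻¹ * Δ.delta A Z) * ((Δ.delta A Z)⁻¹ * Δ.delta A Y)) := by
          rw [mul_assoc, mul_inv_cancel_left]
      _ ≤ cs.length ((Δ.delta A X)⁻¹ * Δ.delta A Z)
            + cs.length ((Δ.delta A Z)⁻¹ * Δ.delta A Y) := cs.length_mul_le _ _
      _ ≤ n := by omega

/-- The key transfer lemma: if `E` is the chamber of the `m`-residue of `D` that is
"at position `x' * s m`" as seen from a chamber `A₁` that is nearer to position
`x' * s m` than to `x'`, then `E` is at position `x' * s m` as seen from every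
chamber `A₂` with compatible Weyl distances. -/
private lemma transfer {A₁ A₂ D E : Finset V} (h₁ : A₁ ∈ Δ.chambers) (h₂ : A₂ ∈ Δ.chambers)
    (hD : D ∈ Δ.chambers) (hE : E ∈ Δ.chambers) {z₁ z₂ x' : W} {m : B}
    (h12 : Δ.delta A₁ A₂ = z₁⁻¹ * z₂) (h2D : Δ.delta A₂ D = z₂⁻¹ * x')
    (h1E : Δ.delta A₁ E = z₁⁻¹ * x' * cs.simple m) (hDE : Δ.delta D E = cs.simple m)
    (hlen : cs.length (z₁⁻¹ * x' * cs.simple m) < cs.length (z₁⁻¹ * x')) :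
    Δ.delta A₂ E = z₂⁻¹ * x' * cs.simple m := by
  rcases Δ.delta_triangle h₂.1 hD.1 hE.1 h₂.2 hD.2 hE.2 m hDE with hc | hc
  · exfalso
    have hlip := lip Δ (cs.length (Δ.delta A₁ E)) h₂ h₁ hE rfl
    have hA₂A₁ : Δ.delta A₂ A₁ = (z₁⁻¹ * z₂)⁻¹ := by rw [Δ.delta_inv A₁ A₂, h12]
    rw [hA₂A₁, hc, h2D, h1E] at hlip
    have hgrp : (z₁⁻¹ * z₂)⁻¹⁻¹ * (z₂⁻¹ * x') = z₁⁻¹ * x' := by group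
    rw [hgrp] at hlip
    omega
  · rw [hc, h2D, mul_assoc]

end BuildingAux

/-- Let `Δ` be a finite-dimensional building, `α` a root of
`Δ` with boundary wall `Mw`, `P` a panel in `Mw`, and `C` a chamber of `Δ`
containing `P` and not contained in `α`. Then there exists an apartment `Ω`
of `Δ` (in the complete apartment system) containing `α ∪ {C}`. -/
theorem statement_9 {B W V : Type*} [Group W] [DecidableEq V]
    {M : CoxeterMatrix B} {cs : CoxeterSystem M W} (Δ : Building cs V)
    (α Mw : Set (Finset V)) (hα : Δ.IsRootWithWall α Mw)
    (P : Finset V) (hP : Δ.IsPanel P) (hPMw : P ∈ Mw)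
    (C : Finset V) (hC : C ∈ Δ.chambers) (hPC : P ⊆ C) (hCα : C ∉ α) :
    ∃ Ω : Set (Finset V), Δ.IsApartment Ω ∧ α ⊆ Ω ∧ C ∈ Ω := by
  classical
  obtain ⟨f, H, hiso, hhalf, hαeq, hMweq⟩ := hα
  obtain ⟨w, i, hH⟩ := hhalf
  set f' : W → Finset V := fun x => f (w * x) with hf'
  set H₀ : Set W := {p : W | cs.length p < cs.length (cs.simple i * p)} with hH₀def
  have hmemH : ∀ x : W, x ∈ H ↔ w⁻¹ * x ∈ H₀ := by
    intro x
    rw [hH]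
    have hrw : (w * cs.simple i)⁻¹ * x = cs.simple i * (w⁻¹ * x) := by
      rw [mul_inv_rev, cs.inv_simple, mul_assoc]
    simp only [Set.mem_setOf_eq, hH₀def, hrw]
  have hiso' : Δ.IsIsometry f' := by
    constructor
    · intro x; exact hiso.1 (w * x)
    · intro a b
      show Δ.delta (f (w * a)) (f (w * b)) = a⁻¹ * b
      rw [hiso.2, mul_inv_rev, mul_assoc, inv_mul_cancel_left]
  have hch : ∀ x, f' x ∈ Δ.chambers := hiso'.1
  have hgen : Δ.genBy f H = Δ.genBy f' H₀ := by
    ext A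
    constructor
    · rintro ⟨q, hq, hsub⟩
      refine ⟨w⁻¹ * q, (hmemH q).mp hq, ?_⟩
      show A ⊆ f (w * (w⁻¹ * q))
      rwa [mul_inv_cancel_left]
    · rintro ⟨p, hp, hsub⟩
      refine ⟨w * p, (hmemH _).mpr (by rwa [inv_mul_cancel_left]), hsub⟩
  have hgenc : Δ.genBy f Hᶜ = Δ.genBy f' H₀ᶜ := by
    ext A
    constructor
    · rintro ⟨q, hq, hsub⟩
      refine ⟨w⁻¹ * q, fun hc => hq ((hmemH q).mpr hc), ?_⟩
      show A ⊆ f (w * (w⁻¹ * q))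
      rwa [mul_inv_cancel_left]
    · rintro ⟨p, hp, hsub⟩
      refine ⟨w * p, fun hc => hp ?_, hsub⟩
      have := (hmemH (w * p)).mp hc
      rwa [inv_mul_cancel_left] at this
  rw [hMweq] at hPMw
  obtain ⟨hP1, hP2⟩ := hPMw
  rw [hgen] at hP1
  rw [hgenc] at hP2
  obtain ⟨u, hu, hPu⟩ := hP1
  obtain ⟨v, hv, hPv⟩ := hP2
  have hune : f' u ≠ f' v := by
    intro h
    have h1 : u⁻¹ * v = 1 := by
      rw [← hiso'.2 u v, h, delta_self Δ (hch v)]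
    exact hv (inv_mul_eq_one.mp h1 ▸ hu)
  have hcard_inter : ∀ {X Y : Finset V}, X ∈ Δ.chambers → Y ∈ Δ.chambers → P ⊆ X → P ⊆ Y →
      X ≠ Y → (X ∩ Y).card + 1 = Δ.rank := by
    intro X Y hX hY hPX hPY hne
    have hle : P.card ≤ (X ∩ Y).card := Finset.card_le_card (Finset.subset_inter hPX hPY)
    have hlt : (X ∩ Y).card < Δ.rank := by
      by_contra hge
      push_neg at hge
      have h1 : X ∩ Y = X := Finset.eq_of_subset_of_card_le Finset.inter_subset_left
        (by rw [hX.2]; exact hge)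
      have h2 : X ⊆ Y := by rw [← h1]; exact Finset.inter_subset_right
      exact hne (Finset.eq_of_subset_of_card_le h2 (by rw [hX.2, hY.2]))
    have := hP.2
    omega
  obtain ⟨j, hj⟩ := (Δ.delta_simple_iff (hch u).1 (hch v).1 (hch u).2 (hch v).2).mpr
    ⟨hune, hcard_inter (hch u) (hch v) hPu hPv hune⟩
  have huvj : u⁻¹ * v = cs.simple j := by rw [← hiso'.2 u v, hj]
  have hveq : v = u * cs.simple j := by rw [← huvj, mul_inv_cancel_left]
  have hu' : cs.length u < cs.length (cs.simple i * u) := hu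
  have hv' : ¬ cs.length v < cs.length (cs.simple i * v) := hv
  have hsv_lt : cs.length (cs.simple i * v) < cs.length v := by
    rcases cs.length_simple_mul v i with hc | hc
    · exact absurd (by omega) hv'
    · omega
  have hassoc1 : cs.simple i * v = cs.simple i * u * cs.simple j := by
    rw [hveq, mul_assoc]
  have husj : cs.length (u * cs.simple j) = cs.length u + 1 := by
    rcases cs.length_mul_simple u j with hc | hc
    · exact hc
    · exfalso
      have h1 := hsv_lt
      rw [hassoc1, hveq] at h1
      rcases cs.length_mul_simple (cs.simple i * u) j with hd | hd <;> omega
  have hsusj : cs.length (cs.simple i * u * cs.simple j) = cs.length u := by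
    have h1 := hsv_lt
    rw [hassoc1, hveq] at h1
    have h2 : cs.length (cs.simple i * u) = cs.length u + 1 := by
      rcases cs.length_simple_mul u i with hc | hc <;> omega
    rcases cs.length_mul_simple (cs.simple i * u) j with hd | hd <;> omega
  have hsu : cs.length (cs.simple i * u) = cs.length u + 1 := by
    rcases cs.length_simple_mul u i with hc | hc <;> omega
  have hlift : cs.simple i * u = u * cs.simple j := lifting cs i j u hsu husj hsusj
  have hCu : C ≠ f' u := by
    intro h
    apply hCα
    rw [hαeq, hgen]
    exact ⟨u, hu, h ▸ Finset.Subset.refl C⟩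
  have hfuC : Δ.delta (f' u) C = cs.simple j := by
    by_cases hCv : C = f' v
    · rw [hCv]; exact hj
    · obtain ⟨k, hk⟩ := (Δ.delta_simple_iff (hch u).1 hC.1 (hch u).2 hC.2).mpr
        ⟨fun h => hCu h.symm, hcard_inter (hch u) hC hPu hPC (fun h => hCu h.symm)⟩
      obtain ⟨l, hl⟩ := (Δ.delta_simple_iff (hch v).1 hC.1 (hch v).2 hC.2).mpr
        ⟨fun h => hCv h.symm, hcard_inter (hch v) hC hPv hPC (fun h => hCv h.symm)⟩
      rcases Δ.delta_triangle (hch u).1 (hch v).1 hC.1 (hch u).2 (hch v).2 hC.2 l hl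
        with hc | hc
      · rw [hc, hj]
      · exfalso
        rw [hk, hj] at hc
        have h1 := congrArg cs.length hc
        rw [cs.length_simple] at h1
        have h2 := cs.length_mul_mod_two (cs.simple j) (cs.simple l)
        rw [cs.length_simple, cs.length_simple] at h2
        omega
  have hbase : ∀ h, h ∈ H₀ → Δ.delta (f' h) C = h⁻¹ * v := by
    intro h hh
    have hh' : cs.length h < cs.length (cs.simple i * h) := hh
    have hkey := key_refl cs (cs.length h) (cs.simple i) h u j (cs.isReflection_simple i)
      rfl hh' hu' hlift
    have hdel : Δ.delta (f' h) (f' u) = h⁻¹ * u := hiso'.2 h u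
    have hstep := Δ.delta_mul_simple (hch h).1 (hch u).1 hC.1 (hch h).2 (hch u).2 hC.2 j
      hfuC (by rw [hdel]; exact hkey)
    rw [hdel] at hstep
    rw [hstep, hveq, ← mul_assoc]
  -- Zorn's lemma on partial isometric extensions of the base `α ∪ {C}`.
  set G₀ : Set (W × Finset V) := (fun h => (h, f' h)) '' H₀ ∪ {(v, C)} with hG₀def
  set J : Set (Set (W × Finset V)) :=
    {G | G₀ ⊆ G ∧ (∀ p ∈ G, p.2 ∈ Δ.chambers) ∧
      ∀ p ∈ G, ∀ q ∈ G, Δ.delta p.2 q.2 = p.1⁻¹ * q.1} with hJdef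
  have hG₀mem : G₀ ∈ J := by
    refine ⟨Set.Subset.refl _, ?_, ?_⟩
    · rintro p (⟨h, hh, rfl⟩ | hp)
      · exact hch h
      · rw [Set.mem_singleton_iff] at hp; subst hp; exact hC
    · rintro p hp q hq
      rcases hp with ⟨h₁, hh₁, rfl⟩ | hp <;> rcases hq with ⟨h₂, hh₂, rfl⟩ | hq
      · exact hiso'.2 h₁ h₂
      · rw [Set.mem_singleton_iff] at hq; subst hq
        exact hbase h₁ hh₁
      · rw [Set.mem_singleton_iff] at hp; subst hp
        show Δ.delta C (f' h₂) = v⁻¹ * h₂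
        rw [Δ.delta_inv (f' h₂) C, hbase h₂ hh₂, mul_inv_rev, inv_inv]
      · rw [Set.mem_singleton_iff] at hp hq; subst hp; subst hq
        show Δ.delta C C = v⁻¹ * v
        rw [delta_self Δ hC, inv_mul_cancel]
  have hchain : ∀ c ⊆ J, IsChain (· ⊆ ·) c → c.Nonempty →
      ∃ ub ∈ J, ∀ G ∈ c, G ⊆ ub := by
    rintro c hcJ hisc ⟨G₁, hG₁⟩
    refine ⟨⋃₀ c, ⟨?_, ?_, ?_⟩, fun G hG => Set.subset_sUnion_of_mem hG⟩
    · exact (hcJ hG₁).1.trans (Set.subset_sUnion_of_mem hG₁)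
    · rintro p ⟨G, hG, hpG⟩
      exact (hcJ hG).2.1 p hpG
    · rintro p ⟨Gp, hGp, hpGp⟩ q ⟨Gq, hGq, hqGq⟩
      rcases hisc.total hGp hGq with hle | hle
      · exact (hcJ hGq).2.2 p (hle hpGp) q hqGq
      · exact (hcJ hGp).2.2 p hpGp q (hle hqGq)
  obtain ⟨Gm, hsub₀, hmaxJ⟩ := zorn_subset_nonempty J hchain G₀ hG₀mem
  obtain ⟨hG₀Gm, hGmch, hGmiso⟩ := hmaxJ.1
  have hvdom : (v, C) ∈ Gm := hG₀Gm (Set.mem_union_right _ rfl)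
  have htotal : ∀ x : W, ∃ A, (x, A) ∈ Gm := by
    by_contra hcon
    push_neg at hcon
    obtain ⟨x₀, hx₀⟩ := hcon
    have hwalk : ∀ (n : ℕ) (x : W), cs.length (v⁻¹ * x) ≤ n → (∀ A, (x, A) ∉ Gm) →
        ∃ (y : W) (m : B) (D' : Finset V), (∀ A, (y, A) ∉ Gm) ∧ (y * cs.simple m, D') ∈ Gm := by
      intro n
      induction n with
      | zero =>
        intro x hlen hx
        exfalso
        have h1 : v⁻¹ * x = 1 := cs.length_eq_zero_iff.mp (Nat.le_zero.mp hlen)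
        exact hx C ((inv_mul_eq_one.mp h1) ▸ hvdom)
      | succ n ihn =>
        intro x hlen hx
        have hxv : x ≠ v := by rintro rfl; exact hx C hvdom
        have hne1 : v⁻¹ * x ≠ 1 := by
          rw [Ne, inv_mul_eq_one]; exact fun h => hxv h.symm
        obtain ⟨r, hr⟩ := cs.exists_rightDescent_of_ne_one hne1
        have hr' : cs.length (v⁻¹ * x * cs.simple r) < cs.length (v⁻¹ * x) := hr
        by_cases hdom : ∃ A, (x * cs.simple r, A) ∈ Gm
        · obtain ⟨A, hA⟩ := hdom
          exact ⟨x, r, A, hx, hA⟩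
        · push_neg at hdom
          refine ihn (x * cs.simple r) ?_ fun A => hdom A
          rw [← mul_assoc]
          omega
    obtain ⟨y, m, D', hy, hyD'⟩ := hwalk (cs.length (v⁻¹ * x₀)) x₀ le_rfl hx₀
    have hyy' : (y * cs.simple m) * cs.simple m = y := by
      rw [mul_assoc, cs.simple_mul_simple_self, mul_one]
    have hD'ch : D' ∈ Δ.chambers := hGmch _ hyD'
    have hD'delta : ∀ p ∈ Gm, Δ.delta p.2 D' = p.1⁻¹ * (y * cs.simple m) :=
      fun p hp => hGmiso p hp _ hyD'
    have hE : ∃ E ∈ Δ.chambers, ∀ p ∈ Gm, Δ.delta p.2 E = p.1⁻¹ * y := by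
      by_cases hwit : ∃ p ∈ Gm,
          cs.length (p.1⁻¹ * y) < cs.length (p.1⁻¹ * (y * cs.simple m))
      · obtain ⟨p₀, hp₀, hp₀len⟩ := hwit
        obtain ⟨E, hEch, hDE, hpE⟩ := exists_step Δ (hGmch _ hp₀) hD'ch m
        have hp₀E : Δ.delta p₀.2 E = p₀.1⁻¹ * (y * cs.simple m) * cs.simple m := by
          rw [hpE, hD'delta p₀ hp₀]
        refine ⟨E, hEch, ?_⟩
        intro p hp
        have htr := transfer Δ (hGmch _ hp₀) (hGmch _ hp) hD'ch hEch
          (hGmiso _ hp₀ _ hp) (hD'delta p hp) hp₀E hDE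
          (by rw [mul_assoc, hyy']; exact hp₀len)
        rw [htr, mul_assoc, hyy']
      · push_neg at hwit
        obtain ⟨E, hEf, hEcard, hDE⟩ := Δ.exists_delta_simple hD'ch.1 hD'ch.2 m
        refine ⟨E, ⟨hEf, hEcard⟩, ?_⟩
        intro p hp
        have hcond : cs.length (Δ.delta p.2 D' * cs.simple m)
            = cs.length (Δ.delta p.2 D') + 1 := by
          rw [hD'delta p hp]
          have h1 := hwit p hp
          have h2 : p.1⁻¹ * (y * cs.simple m) * cs.simple m = p.1⁻¹ * y := by
            rw [mul_assoc, hyy']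
          rcases cs.length_mul_simple (p.1⁻¹ * (y * cs.simple m)) m with hc | hc
          · exact hc
          · rw [h2] at hc; omega
        have hstep := Δ.delta_mul_simple (hGmch _ hp).1 hD'ch.1 hEf (hGmch _ hp).2
          hD'ch.2 hEcard m hDE hcond
        rw [hstep, hD'delta p hp, mul_assoc, hyy']
    obtain ⟨E, hEch, hEdelta⟩ := hE
    have hGm' : insert (y, E) Gm ∈ J := by
      refine ⟨hG₀Gm.trans (Set.subset_insert _ _), ?_, ?_⟩
      · rintro p (rfl | hp)
        · exact hEch
        · exact hGmch p hp
      · rintro p (rfl | hp) q (rfl | hq)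
        · show Δ.delta E E = y⁻¹ * y
          rw [delta_self Δ hEch, inv_mul_cancel]
        · show Δ.delta E q.2 = y⁻¹ * q.1
          rw [Δ.delta_inv q.2 E, hEdelta q hq, mul_inv_rev, inv_inv]
        · show Δ.delta p.2 E = p.1⁻¹ * y
          exact hEdelta p hp
        · exact hGmiso p hp q hq
    have hmem : (y, E) ∈ Gm :=
      hmaxJ.2 hGm' (Set.subset_insert _ _) (Set.mem_insert _ _)
    exact hy E hmem
  choose g hg using htotal
  have hgch : ∀ x, g x ∈ Δ.chambers := fun x => hGmch _ (hg x)
  have hgdelta : ∀ a b, Δ.delta (g a) (g b) = a⁻¹ * b := fun a b => hGmiso _ (hg a) _ (hg b)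
  have hgH₀ : ∀ h, h ∈ H₀ → g h = f' h := by
    intro h hh
    have h1 : (h, f' h) ∈ Gm := hG₀Gm (Set.mem_union_left _ ⟨h, hh, rfl⟩)
    have h2 : Δ.delta (g h) (f' h) = h⁻¹ * h := hGmiso _ (hg h) _ h1
    rw [inv_mul_cancel] at h2
    exact (Δ.delta_eq_one_iff (hgch h).1 (hch h).1 (hgch h).2 (hch h).2).mp h2
  have hgv : g v = C := by
    have h2 : Δ.delta (g v) C = v⁻¹ * v := hGmiso _ (hg v) _ hvdom
    rw [inv_mul_cancel] at h2
    exact (Δ.delta_eq_one_iff (hgch v).1 hC.1 (hgch v).2 hC.2).mp h2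
  refine ⟨Δ.aptOf g, ⟨g, ⟨hgch, hgdelta⟩, rfl⟩, ?_, ?_⟩
  · rw [hαeq, hgen]
    rintro A ⟨h, hh, hsub⟩
    exact ⟨h, trivial, by rw [hgH₀ h hh]; exact hsub⟩
  · exact ⟨v, trivial, by simp [hgv]⟩

end IntersectionsOfApartments
end

section
/- Let Δ be a finite-dimensional building and let α₁, α₂ be two roots in Δ having the same wall M as their boundary. Then α₁ ∪ α₂ is an apartment of Δ (in the complete apartment system) if and only if there exists a panel P ∈ M such that the chamber C₁ ∈ α₁ containing P is different from the chamber C₂ ∈ α₂ containing P. -/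
theorem mul_mul_inv_eq_iff {G : Type*} [Group G] (a t u : G) :
    a * t * a⁻¹ = u ↔ t = a⁻¹ * u * a := by
  constructor
  · rintro rfl; group
  · rintro rfl; group

namespace CoxeterSystem

open Finset

variable {B W : Type*} [Group W] {M : CoxeterMatrix B} (cs : CoxeterSystem M W)

local prefix:100 "s" => cs.simple
local prefix:100 "π" => cs.wordProd
local prefix:100 "ℓ" => cs.length

section ReflectionRepresentation

open scoped Classical

theorem simple_mul_mul_simple_eq_simple_iff (i : B) (t : W) : s i * t * s i = s i ↔ t = s i := by
  constructor
  · intro h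
    calc t = s i * (s i * t * s i) * s i := by simp [mul_assoc]
      _ = s i := by rw [h]; simp
  · rintro rfl
    simp

/-- The action of `s i` in the reflection representation of `W` on pairs (reflection, sign), the
classical route to the strong exchange condition. -/
noncomputable def reflGen (i : B) : Equiv.Perm (W × ZMod 2) :=
  Function.Involutive.toPerm (fun x => (s i * x.1 * s i, x.2 + if x.1 = s i then 1 else 0)) <| by
    rintro ⟨t, ε⟩
    simp only [simple_mul_mul_simple_eq_simple_iff, Prod.mk.injEq]
    refine ⟨by simp [mul_assoc], ?_⟩
    split_ifs <;> simp [add_assoc, CharTwo.add_self_eq_zero]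

theorem reflGen_apply (i : B) (t : W) (ε : ZMod 2) :
    cs.reflGen i (t, ε) = (s i * t * s i, ε + if t = s i then 1 else 0) := rfl

theorem reflGen_mul_reflGen_pow_apply (i j : B) (k : ℕ) (t : W) (ε : ZMod 2) :
    ((cs.reflGen i * cs.reflGen j) ^ k) (t, ε) =
      ((s i * s j) ^ k * t * ((s i * s j) ^ k)⁻¹,
        ε + ∑ n ∈ range (2 * k), if t = (s i * s j)⁻¹ ^ n * s j then 1 else 0) := by
  set x := s i * s j with hx
  have hsx : s j * x = x⁻¹ * s j := by simp [hx, mul_assoc]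
  induction k generalizing t ε with
  | zero => simp
  | succ k ih =>
    have hstep : (cs.reflGen i * cs.reflGen j) (t, ε) = (x * t * x⁻¹,
        ε + ((if t = x⁻¹ ^ 0 * s j then 1 else 0) + if t = x⁻¹ ^ 1 * s j then 1 else 0)) := by
      have h : s j * t * s j = s i ↔ t = x⁻¹ * s j := by
        rw [hx, mul_inv_rev, inv_simple, inv_simple]
        constructor
        · rintro h; rw [← h]; simp [mul_assoc]
        · rintro rfl; simp [mul_assoc]
      rw [Equiv.Perm.mul_apply, reflGen_apply, reflGen_apply, pow_zero, one_mul, pow_one, h,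
        add_assoc]
      simp [hx, mul_assoc]
    have hshift (n : ℕ) : x * t * x⁻¹ = x⁻¹ ^ n * s j ↔ t = x⁻¹ ^ (n + 2) * s j := by
      have h : x⁻¹ * (x⁻¹ ^ n * s j) * x = x⁻¹ ^ (n + 2) * s j := by
        rw [mul_assoc, mul_assoc (x⁻¹ ^ n), hsx, pow_add, pow_two]
        group
      rw [mul_mul_inv_eq_iff, h]
    rw [pow_succ, Equiv.Perm.mul_apply, hstep, ih, Nat.mul_succ, sum_range_succ', sum_range_succ']
    simp only [hshift, zero_add, Prod.mk.injEq]
    constructor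
    · rw [pow_succ]
      group
    · ring

theorem isLiftable_reflGen : M.IsLiftable cs.reflGen := by
  intro i j
  ext ⟨t, ε⟩ : 1
  have hper (n : ℕ) : (s i * s j)⁻¹ ^ (M i j + n) = (s i * s j)⁻¹ ^ n := by
    rw [pow_add, inv_pow, simple_mul_simple_pow, inv_one, one_mul]
  rw [reflGen_mul_reflGen_pow_apply, simple_mul_simple_pow, two_mul, sum_range_add]
  simp only [hper, CharTwo.add_self_eq_zero, add_zero, one_mul, inv_one, mul_one]
  rfl

noncomputable def reflRep : W →* Equiv.Perm (W × ZMod 2) :=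
  cs.lift ⟨cs.reflGen, cs.isLiftable_reflGen⟩

theorem reflRep_wordProd_apply (ω : List B) (t : W) (ε : ZMod 2) :
    cs.reflRep (π ω) (t, ε) = (π ω * t * (π ω)⁻¹, ε + (cs.rightInvSeq ω).count t) := by
  induction ω generalizing ε with
  | nil => simp
  | cons k ω ih =>
    have hcond : π ω * t * (π ω)⁻¹ = s k ↔ (π ω)⁻¹ * s k * π ω = t := by
      rw [mul_mul_inv_eq_iff, eq_comm]
    rw [wordProd_cons, map_mul, Equiv.Perm.mul_apply, ih, reflRep, lift_apply_simple,
      reflGen_apply, hcond, rightInvSeq, List.count_cons]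
    simp only [beq_iff_eq, mul_inv_rev, inv_simple, Prod.mk.injEq]
    refine ⟨by group, ?_⟩
    split_ifs <;> push_cast <;> ring

/-- The parity of the number of occurrences of `t` in the right inversion sequence of any word
for `w`; that it does not depend on the word is the content of the reflection representation. -/
noncomputable def reflParity (w t : W) : ZMod 2 := (cs.reflRep w (t, 0)).2

theorem reflParity_wordProd (ω : List B) (t : W) :
    cs.reflParity (π ω) t = (cs.rightInvSeq ω).count t := by
  simp [reflParity, reflRep_wordProd_apply]

theorem reflRep_apply (w t : W) (ε : ZMod 2) :
    cs.reflRep w (t, ε) = (w * t * w⁻¹, ε + cs.reflParity w t) := by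
  obtain ⟨ω, -, rfl⟩ := cs.exists_isReduced w
  rw [reflRep_wordProd_apply, reflParity_wordProd]

theorem reflParity_mul (a b t : W) :
    cs.reflParity (a * b) t = cs.reflParity b t + cs.reflParity a (b * t * b⁻¹) := by
  have h := cs.reflRep_apply (a * b) t 0
  rw [map_mul, Equiv.Perm.mul_apply, reflRep_apply, reflRep_apply] at h
  simpa using (congrArg Prod.snd h).symm

theorem reflParity_simple (k : B) (t : W) :
    cs.reflParity (s k) t = if t = s k then 1 else 0 := by
  simp [reflParity, reflRep, reflGen_apply]

theorem reflParity_one (t : W) : cs.reflParity 1 t = 0 := by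
  simp [reflParity]

theorem reflParity_self {t : W} (ht : cs.IsReflection t) : cs.reflParity t t = 1 := by
  obtain ⟨v, k, rfl⟩ := ht
  have hinv : cs.reflParity v⁻¹ (v * s k * v⁻¹) = cs.reflParity v (s k) := by
    have h := cs.reflParity_mul v⁻¹ v (s k)
    rw [inv_mul_cancel, reflParity_one] at h
    exact (CharTwo.add_eq_zero.mp h.symm).symm
  have hsk : cs.reflParity (v * s k) (s k) = 1 + cs.reflParity v (s k) := by
    rw [reflParity_mul, reflParity_simple, if_pos rfl, simple_mul_simple_self, one_mul, inv_simple]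
  have h := cs.reflParity_mul (v * s k) v⁻¹ (v * s k * v⁻¹)
  rw [show v⁻¹ * (v * s k * v⁻¹) * v⁻¹⁻¹ = s k by group, hinv, hsk] at h
  rw [h, add_left_comm, CharTwo.add_self_eq_zero, add_zero]

theorem reflParity_eq_one_iff {t : W} (ht : cs.IsReflection t) (w : W) :
    cs.reflParity w t = 1 ↔ ℓ (w * t) < ℓ w := by
  have descent (w : W) (h : cs.reflParity w t = 1) : ℓ (w * t) < ℓ w := by
    obtain ⟨ω, hω, rfl⟩ := cs.exists_isReduced w
    rw [reflParity_wordProd] at h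
    have hmem : t ∈ cs.rightInvSeq ω := by
      by_contra hmem
      simp [List.count_eq_zero_of_not_mem hmem] at h
    exact (cs.isRightInversion_of_mem_rightInvSeq hω hmem).2
  refine ⟨descent w, fun h => ?_⟩
  have hmul := cs.reflParity_mul (w * t) t t
  rw [mul_assoc, ht.mul_self, mul_one, one_mul, ht.inv, reflParity_self cs ht] at hmul
  have h0 : cs.reflParity (w * t) t = 0 := by
    refine ((by decide : ∀ a : ZMod 2, a = 0 ∨ a = 1) _).resolve_right fun h1 => ?_
    have := descent _ h1
    rw [mul_assoc, ht.mul_self, mul_one] at this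
    omega
  rw [hmul, h0, add_zero]

theorem reflParity_inv_simple_eq_one_iff (w : W) (i : B) :
    cs.reflParity w⁻¹ (s i) = 1 ↔ cs.IsLeftDescent w i := by
  rw [reflParity_eq_one_iff cs (cs.isReflection_simple i), IsLeftDescent, ← inv_simple,
    ← mul_inv_rev, length_inv, length_inv, inv_simple]

theorem reflParity_conj_simple_eq_one_iff (w : W) (i : B) :
    cs.reflParity w (w⁻¹ * s i * w) = 1 ↔ cs.IsLeftDescent w i := by
  rw [reflParity_eq_one_iff cs ⟨w⁻¹, i, by group⟩, IsLeftDescent, mul_assoc,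
    mul_inv_cancel_left]

end ReflectionRepresentation

theorem _root_.ZMod.add_eq_one_iff_not_iff (a b : ZMod 2) : a + b = 1 ↔ ¬(a = 1 ↔ b = 1) := by
  revert a b; decide

/-- Left multiplication by `c` maps the wall of `s i` to the wall of `s j`, so it either preserves
or swaps the two sides, according to the side `c` lies on. -/
theorem isLeftDescent_mul_iff {i j : B} {c : W} (hc : c * s i * c⁻¹ = s j) (v : W) :
    cs.IsLeftDescent (c * v) j ↔ ¬(cs.IsLeftDescent c j ↔ cs.IsLeftDescent v i) := by
  rw [← reflParity_inv_simple_eq_one_iff, ← reflParity_inv_simple_eq_one_iff,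
    ← reflParity_inv_simple_eq_one_iff, mul_inv_rev, reflParity_mul, inv_inv,
    show c⁻¹ * s j * c = s i by rw [← hc]; group, ZMod.add_eq_one_iff_not_iff]

theorem mul_simple_eq_simple_mul_of_isLeftDescent {i k : B} {u : W}
    (hu : ¬cs.IsLeftDescent u i) (h : cs.IsLeftDescent (u * s k) i) : u * s k = s i * u := by
  classical
  rw [← reflParity_inv_simple_eq_one_iff] at hu h
  rw [mul_inv_rev, reflParity_mul, inv_simple, reflParity_simple] at h
  split_ifs at h with hk
  · rw [← hk]; group
  · simp_all

theorem isLeftDescent_simple_mul_iff {i : B} {w : W} :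
    cs.IsLeftDescent (s i * w) i ↔ ¬cs.IsLeftDescent w i := by
  rw [isLeftDescent_iff_not_isLeftDescent_mul, simple_mul_simple_cancel_left]

theorem length_inv_mul_lt_of_isLeftDescent_iff {i : B} {u v : W}
    (h : cs.IsLeftDescent u i ↔ cs.IsLeftDescent v i) : ℓ (u⁻¹ * v) < ℓ (u⁻¹ * (s i * v)) := by
  have ht : cs.IsReflection (v⁻¹ * s i * v) := ⟨v⁻¹, i, by group⟩
  have hpar : cs.reflParity (u⁻¹ * v) (v⁻¹ * s i * v) ≠ 1 := by
    rw [reflParity_mul, show v * (v⁻¹ * s i * v) * v⁻¹ = s i by group, ne_eq,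
      ZMod.add_eq_one_iff_not_iff, reflParity_conj_simple_eq_one_iff,
      reflParity_inv_simple_eq_one_iff, h]
    tauto
  rw [ne_eq, reflParity_eq_one_iff cs ht] at hpar
  have hne := ht.length_mul_left_ne (u⁻¹ * v)
  rw [show u⁻¹ * v * (v⁻¹ * s i * v) = u⁻¹ * (s i * v) by group] at hpar hne
  omega

theorem length_inv_mul_simple_mul {i : B} {u v : W}
    (h : cs.IsLeftDescent u i ↔ cs.IsLeftDescent v i) (hv : ℓ (v⁻¹ * (s i * v)) = 1) :
    ℓ (u⁻¹ * (s i * v)) = ℓ (u⁻¹ * v) + 1 := by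
  have hle := cs.length_mul_le (u⁻¹ * v) (v⁻¹ * (s i * v))
  rw [show u⁻¹ * v * (v⁻¹ * (s i * v)) = u⁻¹ * (s i * v) by group] at hle
  have := cs.length_inv_mul_lt_of_isLeftDescent_iff h
  omega

theorem length_inv_mul_simple_mul' {i : B} {u v : W}
    (h : cs.IsLeftDescent u i ↔ cs.IsLeftDescent v i) (hu : ℓ (u⁻¹ * (s i * u)) = 1) :
    ℓ (u⁻¹ * (s i * v)) = ℓ (u⁻¹ * v) + 1 := by
  calc ℓ (u⁻¹ * (s i * v)) = ℓ (v⁻¹ * (s i * u)) := by rw [← length_inv]; simp [mul_assoc]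
    _ = ℓ (v⁻¹ * u) + 1 := cs.length_inv_mul_simple_mul h.symm hu
    _ = ℓ (u⁻¹ * v) + 1 := by rw [← length_inv]; simp

theorem isLeftDescent_mul_iff_not_of_conj {i j : B} {p q : W} (hp : ¬cs.IsLeftDescent p i)
    (hq : ¬cs.IsLeftDescent q j) (h : p⁻¹ * s i * p = q⁻¹ * s j * q) (v : W) :
    cs.IsLeftDescent (q * p⁻¹ * s i * v) j ↔ ¬cs.IsLeftDescent v i := by
  have hc : q * p⁻¹ * s i * s i * (q * p⁻¹ * s i)⁻¹ = s j := by
    calc _ = q * (p⁻¹ * s i * p) * q⁻¹ := by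
          simp only [mul_inv_rev, inv_inv, inv_simple, mul_assoc, simple_mul_simple_cancel_left]
      _ = s j := by rw [h]; group
  have hcsp := cs.isLeftDescent_mul_iff hc (s i * p)
  rw [show q * p⁻¹ * s i * (s i * p) = q by simp [mul_assoc]] at hcsp
  rw [cs.isLeftDescent_mul_iff hc]
  have := cs.isLeftDescent_simple_mul_iff.mpr hp
  tauto

/-- A minimal gallery from the positive to the negative side of the wall of `s i` crosses the wall
between some chamber `y` and its mirror image `s i * y`. -/
theorem exists_wall_crossing_of_isLeftDescent {i : B} {u v : W} (hu : ¬cs.IsLeftDescent u i)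
    (hv : cs.IsLeftDescent v i) :
    ∃ y, ¬cs.IsLeftDescent y i ∧ ℓ (y⁻¹ * (s i * y)) = 1 ∧
      ℓ (u⁻¹ * (s i * y)) + ℓ ((s i * y)⁻¹ * v) = ℓ (u⁻¹ * v) := by
  induction hn : ℓ (u⁻¹ * v) generalizing u with
  | zero =>
    rw [length_eq_zero_iff, inv_mul_eq_one] at hn
    exact absurd (hn ▸ hv) hu
  | succ n ih =>
    have hne : u⁻¹ * v ≠ 1 := fun h => by simp [h] at hn
    obtain ⟨k, hk⟩ := cs.exists_leftDescent_of_ne_one hne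
    have hkv : (u * s k)⁻¹ * v = s k * (u⁻¹ * v) := by simp [mul_assoc]
    have hk' : ℓ ((u * s k)⁻¹ * v) = n := by
      rw [isLeftDescent_iff] at hk
      rw [hkv]
      omega
    by_cases hcross : cs.IsLeftDescent (u * s k) i
    · have hwall := cs.mul_simple_eq_simple_mul_of_isLeftDescent hu hcross
      refine ⟨u, hu, ?_, ?_⟩
      · rw [← hwall, inv_mul_cancel_left, length_simple]
      · rw [← hwall, inv_mul_cancel_left, length_simple, hk', add_comm]
    · obtain ⟨y, hy, hy1, hlen⟩ := ih hcross hk'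
      refine ⟨y, hy, hy1, le_antisymm ?_ ?_⟩
      · have := cs.length_mul_le (s k) ((u * s k)⁻¹ * (s i * y))
        rw [show s k * ((u * s k)⁻¹ * (s i * y)) = u⁻¹ * (s i * y) by simp [mul_assoc],
          length_simple] at this
        omega
      · have := cs.length_mul_le (u⁻¹ * (s i * y)) ((s i * y)⁻¹ * v)
        rwa [show u⁻¹ * (s i * y) * ((s i * y)⁻¹ * v) = u⁻¹ * v by group, hn] at this

end CoxeterSystem

namespace IntersectionsOfApartments

namespace Building

variable {B W V : Type*} [Group W] [DecidableEq V] {M : CoxeterMatrix B}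
  {cs : CoxeterSystem M W} (Δ : Building cs V)

local prefix:100 "s" => cs.simple
local prefix:100 "ℓ" => cs.length

theorem delta_self {C : Finset V} (hC : C ∈ Δ.chambers) : Δ.delta C C = 1 :=
  (Δ.delta_eq_one_iff hC.1 hC.1 hC.2 hC.2).mpr rfl

theorem eq_of_subset_of_mem_chambers {C D : Finset V} (hC : C ∈ Δ.chambers)
    (hD : D ∈ Δ.chambers) (h : C ⊆ D) : C = D :=
  Finset.eq_of_subset_of_card_le h (by rw [hC.2, hD.2])

theorem card_inter_add_one_eq_rank {P C D : Finset V} (hP : Δ.IsPanel P) (hC : C ∈ Δ.chambers)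
    (hD : D ∈ Δ.chambers) (hPC : P ⊆ C) (hPD : P ⊆ D) (hne : C ≠ D) :
    (C ∩ D).card + 1 = Δ.rank := by
  have hlt : (C ∩ D).card < C.card := Finset.card_lt_card <|
    Finset.ssubset_iff_subset_ne.2 ⟨Finset.inter_subset_left, fun h =>
      hne (Δ.eq_of_subset_of_mem_chambers hC hD (h ▸ Finset.inter_subset_right))⟩
  have hle := Finset.card_le_card (Finset.subset_inter hPC hPD)
  have := hP.2
  have := hC.2
  omega

theorem exists_delta_eq_simple_of_panel {P C D : Finset V} (hP : Δ.IsPanel P)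
    (hC : C ∈ Δ.chambers) (hD : D ∈ Δ.chambers) (hPC : P ⊆ C) (hPD : P ⊆ D) (hne : C ≠ D) :
    ∃ k, Δ.delta C D = s k :=
  (Δ.delta_simple_iff hC.1 hD.1 hC.2 hD.2).mpr
    ⟨hne, Δ.card_inter_add_one_eq_rank hP hC hD hPC hPD hne⟩

theorem delta_eq_delta_of_panel {P C E E' : Finset V} (hP : Δ.IsPanel P)
    (hC : C ∈ Δ.chambers) (hE : E ∈ Δ.chambers) (hE' : E' ∈ Δ.chambers) (hPC : P ⊆ C)
    (hPE : P ⊆ E) (hPE' : P ⊆ E') (hEC : E ≠ C) (hE'C : E' ≠ C) :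
    Δ.delta C E = Δ.delta C E' := by
  by_cases hEE' : E = E'
  · rw [hEE']
  obtain ⟨k, hk⟩ := Δ.exists_delta_eq_simple_of_panel hP hC hE hPC hPE (Ne.symm hEC)
  obtain ⟨k', hk'⟩ := Δ.exists_delta_eq_simple_of_panel hP hC hE' hPC hPE' (Ne.symm hE'C)
  obtain ⟨k'', hk''⟩ := Δ.exists_delta_eq_simple_of_panel hP hE hE' hPE hPE' hEE'
  refine (Δ.delta_triangle hC.1 hE.1 hE'.1 hC.2 hE.2 hE'.2 k'' hk'').elim Eq.symm fun h => ?_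
  -- Both distances have length one, which rules out the second alternative by parity.
  have hpar := cs.length_mul_mod_two (Δ.delta C E) (s k'')
  rw [← h, hk, hk', cs.length_simple, cs.length_simple, cs.length_simple] at hpar
  omega

theorem exists_chamber_delta_eq {D E : Finset V} (hD : D ∈ Δ.chambers) (hE : E ∈ Δ.chambers)
    (w : W) : ∃ E' ∈ Δ.chambers, Δ.delta D E' = w ∧ Δ.delta E' E = w⁻¹ * Δ.delta D E := by
  obtain ⟨f, hfc, hfd, ⟨u, rfl⟩, ⟨v, rfl⟩⟩ := Δ.pair_in_apartment hD.1 hE.1 hD.2 hE.2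
  refine ⟨f (u * w), hfc _, by rw [hfd]; group, by rw [hfd, hfd]; group⟩

theorem delta_eq_mul_of_length_add {C D E : Finset V} {x y : W} (hC : C ∈ Δ.chambers)
    (hD : D ∈ Δ.chambers) (hE : E ∈ Δ.chambers) (hCD : Δ.delta C D = x) (hDE : Δ.delta D E = y)
    (hxy : ℓ (x * y) = ℓ x + ℓ y) : Δ.delta C E = x * y := by
  subst hCD
  induction hn : ℓ y generalizing E y with
  | zero =>
    rw [cs.length_eq_zero_iff] at hn
    subst hn
    rw [(Δ.delta_eq_one_iff hD.1 hE.1 hD.2 hE.2).mp hDE, mul_one]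
  | succ n ih =>
    obtain ⟨k, hk⟩ := cs.exists_rightDescent_of_ne_one (w := y) (by rintro rfl; simp at hn)
    rw [cs.isRightDescent_iff] at hk
    obtain ⟨E', hE', hDE', hE'E⟩ := Δ.exists_chamber_delta_eq hD hE (y * s k)
    have hyk : ℓ (Δ.delta C D * (y * s k)) = ℓ (Δ.delta C D) + ℓ (y * s k) := by
      have := cs.length_mul_le (Δ.delta C D) (y * s k)
      have := cs.length_mul_simple (Δ.delta C D * y) k
      rw [mul_assoc] at this
      omega
    have hCE' := ih hE' hDE' hyk (by omega)
    have hE'E' : Δ.delta E' E = s k := by rw [hE'E, hDE]; simp [mul_assoc]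
    have hback : Δ.delta C E' * s k = Δ.delta C D * y := by
      rw [hCE', mul_assoc, mul_assoc, cs.simple_mul_simple_self, mul_one]
    rw [← hback]
    refine Δ.delta_mul_simple hC.1 hE'.1 hE.1 hC.2 hE'.2 hE.2 k hE'E' ?_
    rw [hback, hxy, hCE']
    omega

theorem mem_Ch_genBy_iff {f : W → Finset V} (hf : Δ.IsIsometry f) {H : Set W} {C : Finset V} :
    C ∈ Δ.Ch (Δ.genBy f H) ↔ ∃ w ∈ H, C = f w := by
  constructor
  · rintro ⟨⟨w, hw, hsub⟩, hC⟩
    exact ⟨w, hw, Δ.eq_of_subset_of_mem_chambers hC (hf.1 w) hsub⟩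
  · rintro ⟨w, hw, rfl⟩
    exact ⟨⟨w, hw, subset_rfl⟩, hf.1 w⟩

theorem genBy_comp_mul_left (f : W → Finset V) (c : W) (H : Set W) :
    Δ.genBy (fun v => f (c * v)) ((c * ·) ⁻¹' H) = Δ.genBy f H := by
  ext A
  constructor
  · rintro ⟨w, hw, hA⟩
    exact ⟨c * w, hw, hA⟩
  · rintro ⟨w, hw, hA⟩
    exact ⟨c⁻¹ * w, by simpa using hw, by simpa using hA⟩

theorem aptOf_piecewise (H : Set W) [∀ w, Decidable (w ∈ H)] (f₁ f₂ : W → Finset V) :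
    Δ.aptOf (H.piecewise f₁ f₂) = Δ.genBy f₁ H ∪ Δ.genBy f₂ Hᶜ := by
  ext A
  constructor
  · rintro ⟨w, -, hA⟩
    by_cases hw : w ∈ H
    · exact .inl ⟨w, hw, by rwa [Set.piecewise_eq_of_mem _ _ _ hw] at hA⟩
    · exact .inr ⟨w, hw, by rwa [Set.piecewise_eq_of_notMem _ _ _ hw] at hA⟩
  · rintro (⟨w, hw, hA⟩ | ⟨w, hw, hA⟩)
    · exact ⟨w, trivial, by rwa [Set.piecewise_eq_of_mem _ _ _ hw]⟩
    · exact ⟨w, trivial, by rwa [Set.piecewise_eq_of_notMem _ _ _ hw]⟩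

namespace IsIsometry
variable {Δ} {f f₁ f₂ : W → Finset V}

theorem injective (hf : Δ.IsIsometry f) : Function.Injective f := by
  intro u v h
  have huv := hf.2 u v
  rw [h, Δ.delta_self (hf.1 v)] at huv
  exact inv_mul_eq_one.mp huv.symm

theorem comp_mul_left (hf : Δ.IsIsometry f) (c : W) : Δ.IsIsometry (fun v => f (c * v)) :=
  ⟨fun v => hf.1 _, fun u v => by rw [hf.2]; group⟩

theorem isPanel_inter (hf : Δ.IsIsometry f) {u v : W} (h : ℓ (u⁻¹ * v) = 1) :
    Δ.IsPanel (f u ∩ f v) := by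
  obtain ⟨k, hk⟩ := cs.length_eq_one_iff.mp h
  refine ⟨Δ.down_closed (hf.1 u).1 Finset.inter_subset_left, ?_⟩
  exact ((Δ.delta_simple_iff (hf.1 u).1 (hf.1 v).1 (hf.1 u).2 (hf.1 v).2).mp
    ⟨k, by rw [hf.2, hk]⟩).2

theorem eq_simple_mul_of_panel_subset (hf : Δ.IsIsometry f) {i : B} {P : Finset V} {p p' : W}
    (hP : Δ.IsPanel P) (hp : ¬cs.IsLeftDescent p i) (hp' : cs.IsLeftDescent p' i)
    (hPp : P ⊆ f p) (hPp' : P ⊆ f p') : p' = s i * p := by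
  have hne : f p ≠ f p' := fun h => hp (hf.injective h ▸ hp')
  obtain ⟨k, hk⟩ := Δ.exists_delta_eq_simple_of_panel hP (hf.1 p) (hf.1 p') hPp hPp' hne
  rw [hf.2, inv_mul_eq_iff_eq_mul] at hk
  rw [hk] at hp' ⊢
  exact cs.mul_simple_eq_simple_mul_of_isLeftDescent hp hp'

theorem delta_eq_of_panel_mem_wall (hf : Δ.IsIsometry f) {i : B} {P E : Finset V} {p : W}
    (hP : Δ.IsPanel P) (hPw : P ∈ Δ.genBy f {w | cs.IsLeftDescent w i})
    (hp : ¬cs.IsLeftDescent p i) (hPp : P ⊆ f p) (hE : E ∈ Δ.chambers) (hPE : P ⊆ E)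
    (hEp : E ≠ f p) : Δ.delta (f p) E = p⁻¹ * (s i * p) := by
  obtain ⟨p', hp', hPp'⟩ := hPw
  have hp's := hf.eq_simple_mul_of_panel_subset hP hp hp' hPp hPp'
  have hne : f p' ≠ f p := fun h => hp (hf.injective h ▸ hp')
  rw [Δ.delta_eq_delta_of_panel hP (hf.1 p) hE (hf.1 p') hPp hPE hPp' hEp hne, hf.2, hp's]

/-- A minimal gallery between the two sides of the wall crosses it between some `y` and `s i * y`,
where the two isometries are assumed to match. -/
theorem piecewise (hf₁ : Δ.IsIsometry f₁) (hf₂ : Δ.IsIsometry f₂) {i : B}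
    [∀ w, Decidable (w ∈ {w | ¬cs.IsLeftDescent w i})]
    (hwall : ∀ y, ¬cs.IsLeftDescent y i → ℓ (y⁻¹ * (s i * y)) = 1 →
      Δ.delta (f₁ y) (f₂ (s i * y)) = y⁻¹ * (s i * y)) :
    Δ.IsIsometry ({w | ¬cs.IsLeftDescent w i}.piecewise f₁ f₂) := by
  have cross (u v : W) (hu : ¬cs.IsLeftDescent u i) (hv : cs.IsLeftDescent v i) :
      Δ.delta (f₁ u) (f₂ v) = u⁻¹ * v := by
    obtain ⟨y, hy, hy1, hgeo⟩ := cs.exists_wall_crossing_of_isLeftDescent hu hv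
    have hwall' : Δ.delta (f₁ u) (f₂ (s i * y)) = u⁻¹ * (s i * y) := by
      rw [show u⁻¹ * (s i * y) = u⁻¹ * y * (y⁻¹ * (s i * y)) by group]
      refine Δ.delta_eq_mul_of_length_add (hf₁.1 u) (hf₁.1 y) (hf₂.1 _) (hf₁.2 u y)
        (hwall y hy hy1) ?_
      rw [show u⁻¹ * y * (y⁻¹ * (s i * y)) = u⁻¹ * (s i * y) by group, hy1,
        cs.length_inv_mul_simple_mul (iff_of_false hu hy) hy1]
    rw [show u⁻¹ * v = u⁻¹ * (s i * y) * ((s i * y)⁻¹ * v) by group]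
    refine Δ.delta_eq_mul_of_length_add (hf₁.1 u) (hf₂.1 _) (hf₂.1 v) hwall' (hf₂.2 _ v) ?_
    rw [show u⁻¹ * (s i * y) * ((s i * y)⁻¹ * v) = u⁻¹ * v by group, hgeo]
  refine ⟨fun w => ?_, fun u v => ?_⟩
  · by_cases hw : cs.IsLeftDescent w i
    · rw [Set.piecewise_eq_of_notMem _ _ _ (not_not.mpr hw)]; exact hf₂.1 w
    · rw [Set.piecewise_eq_of_mem _ _ _ hw]; exact hf₁.1 w
  by_cases hu : cs.IsLeftDescent u i <;> by_cases hv : cs.IsLeftDescent v i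
  · rw [Set.piecewise_eq_of_notMem _ _ _ (not_not.mpr hu),
      Set.piecewise_eq_of_notMem _ _ _ (not_not.mpr hv), hf₂.2]
  · rw [Set.piecewise_eq_of_notMem _ _ _ (not_not.mpr hu), Set.piecewise_eq_of_mem _ _ _ hv,
      Δ.delta_inv, cross v u hv hu]
    group
  · rw [Set.piecewise_eq_of_mem _ _ _ hu, Set.piecewise_eq_of_notMem _ _ _ (not_not.mpr hv),
      cross u v hu hv]
  · rw [Set.piecewise_eq_of_mem _ _ _ hu, Set.piecewise_eq_of_mem _ _ _ hv, hf₁.2]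

/-- If the second root meets the wall of the first, from the far side, then the matching
`f₁ y ↦ f₂ (s i * y)` across the wall, known at one chamber `p` next to the wall, holds at every
chamber `y` next to the wall. -/
theorem delta_apply_simple_mul_eq (hf₁ : Δ.IsIsometry f₁) (hf₂ : Δ.IsIsometry f₂) {i : B}
    (hwall : Δ.genBy f₁ {w | ¬cs.IsLeftDescent w i} ∩ Δ.genBy f₁ {w | cs.IsLeftDescent w i} ⊆
      Δ.genBy f₂ {w | cs.IsLeftDescent w i})
    {p : W} (hp : ¬cs.IsLeftDescent p i) (hp1 : ℓ (p⁻¹ * (s i * p)) = 1)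
    (hpw : Δ.delta (f₁ p) (f₂ (s i * p)) = p⁻¹ * (s i * p))
    {y : W} (hy : ¬cs.IsLeftDescent y i) (hy1 : ℓ (y⁻¹ * (s i * y)) = 1) :
    Δ.delta (f₁ y) (f₂ (s i * y)) = y⁻¹ * (s i * y) := by
  have hsy := cs.isLeftDescent_simple_mul_iff.mpr hy
  obtain ⟨a, ha, hPa⟩ := hwall
    ⟨⟨y, hy, Finset.inter_subset_left⟩, ⟨s i * y, hsy, Finset.inter_subset_right⟩⟩
  have hpw' : Δ.delta (f₂ (s i * p)) (f₁ p) = p⁻¹ * (s i * p) := by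
    rw [Δ.delta_inv, hpw]; simp [mul_assoc]
  have hpy := cs.length_inv_mul_simple_mul (iff_of_false hp hy) hy1
  -- `f₂ a = f₁ y` would give `a = y` on computing `δ (f₂ (s i * p)) (f₁ y)` through `f₁ p`.
  have hay : f₂ a ≠ f₁ y := by
    intro h
    have h₁ := Δ.delta_eq_mul_of_length_add (hf₂.1 _) (hf₁.1 p) (hf₁.1 y) hpw' (hf₁.2 p y)
      (by rw [show p⁻¹ * (s i * p) * (p⁻¹ * y) = p⁻¹ * (s i * y) by group, hpy, hp1, add_comm])
    rw [← h, hf₂.2, show p⁻¹ * (s i * p) * (p⁻¹ * y) = (s i * p)⁻¹ * y by simp [mul_assoc]] at h₁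
    exact hy (mul_left_cancel h₁ ▸ ha)
  have hya : Δ.delta (f₁ y) (f₂ a) = y⁻¹ * (s i * y) := by
    rw [Δ.delta_eq_delta_of_panel (hf₁.isPanel_inter hy1) (hf₁.1 y) (hf₂.1 a) (hf₁.1 _)
      Finset.inter_subset_left hPa Finset.inter_subset_right hay
      (fun h => hy (hf₁.injective h ▸ hsy)), hf₁.2]
  -- Computing `δ (f₁ p) (f₂ a)` through `f₁ y` and through `f₂ (s i * p)` gives `a = s i * y`.
  have hspa := cs.length_inv_mul_simple_mul'
    (iff_of_true (cs.isLeftDescent_simple_mul_iff.mpr hp) ha)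
    (by rwa [cs.simple_mul_simple_cancel_left, mul_inv_rev, cs.inv_simple, mul_assoc])
  have h₁ := Δ.delta_eq_mul_of_length_add (hf₁.1 p) (hf₁.1 y) (hf₂.1 a) (hf₁.2 p y) hya
    (by rw [show p⁻¹ * y * (y⁻¹ * (s i * y)) = p⁻¹ * (s i * y) by group, hpy, hy1])
  have h₂ := Δ.delta_eq_mul_of_length_add (hf₁.1 p) (hf₂.1 _) (hf₂.1 a) hpw (hf₂.2 _ a)
    (by rw [show p⁻¹ * (s i * p) * ((s i * p)⁻¹ * a) = (s i * p)⁻¹ * (s i * a) by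
      simp [mul_assoc], hspa, hp1, add_comm])
  obtain rfl : a = s i * y := by
    rw [h₁] at h₂
    simpa [mul_assoc] using h₂.symm
  exact hya

end IsIsometry

/-- `α` is the image under the isometry `f` of the simple root `{w | ℓ w < ℓ (s i * w)}` of
`Σ(W,S)`, and `Mw` is its wall. -/
def IsSimpleRootImage (f : W → Finset V) (i : B) (α Mw : Set (Finset V)) : Prop :=
  Δ.IsIsometry f ∧ α = Δ.genBy f {w | ¬cs.IsLeftDescent w i} ∧
    Mw = Δ.genBy f {w | ¬cs.IsLeftDescent w i} ∩ Δ.genBy f {w | cs.IsLeftDescent w i}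

variable {Δ}

theorem IsRootWithWall.exists_isSimpleRootImage {α Mw : Set (Finset V)}
    (h : Δ.IsRootWithWall α Mw) : ∃ f i, Δ.IsSimpleRootImage f i α Mw := by
  obtain ⟨f, H, hf, ⟨w, i, rfl⟩, rfl, rfl⟩ := h
  have hH : (w * ·) ⁻¹' {v | ℓ (w⁻¹ * v) < ℓ ((w * s i)⁻¹ * v)} =
      {v | ¬cs.IsLeftDescent v i} := by
    ext v
    have := cs.length_simple_mul_ne v i
    simp only [Set.mem_preimage, Set.mem_ofPred_eq, inv_mul_cancel_left, mul_inv_rev,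
      cs.inv_simple, mul_assoc, CoxeterSystem.IsLeftDescent]
    omega
  have hHc : (w * ·) ⁻¹' {v | ℓ (w⁻¹ * v) < ℓ ((w * s i)⁻¹ * v)}ᶜ =
      {v | cs.IsLeftDescent v i} := by
    rw [Set.preimage_compl, hH]
    ext
    simp
  refine ⟨fun v => f (w * v), i, hf.comp_mul_left w, ?_, ?_⟩
  · rw [← hH, genBy_comp_mul_left]
  · rw [← hH, ← hHc, genBy_comp_mul_left, genBy_comp_mul_left]

namespace IsSimpleRootImage

variable {f₁ f₂ : W → Finset V} {i j : B} {α₁ α₂ Mw : Set (Finset V)}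

theorem exists_panel_of_isApartment_union (h₁ : Δ.IsSimpleRootImage f₁ i α₁ Mw)
    (h₂ : Δ.IsSimpleRootImage f₂ j α₂ Mw) (hA : Δ.IsApartment (α₁ ∪ α₂)) :
    ∃ P : Finset V, Δ.IsPanel P ∧ P ∈ Mw ∧ ∃ C₁ C₂ : Finset V, C₁ ∈ Δ.Ch α₁ ∧ P ⊆ C₁ ∧
      C₂ ∈ Δ.Ch α₂ ∧ P ⊆ C₂ ∧ C₁ ≠ C₂ := by
  obtain ⟨hf₁, rfl, rfl⟩ := h₁
  obtain ⟨hf₂, rfl, hMw⟩ := h₂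
  have h1 := cs.not_isLeftDescent_one i
  have hsi : cs.IsLeftDescent (s i) i := by simpa using cs.isLeftDescent_simple_mul_iff.mpr h1
  have hP : Δ.IsPanel (f₁ 1 ∩ f₁ (s i)) := hf₁.isPanel_inter (by simp)
  have hPM : f₁ 1 ∩ f₁ (s i) ∈
      Δ.genBy f₁ {w | ¬cs.IsLeftDescent w i} ∩ Δ.genBy f₁ {w | cs.IsLeftDescent w i} :=
    ⟨⟨1, h1, Finset.inter_subset_left⟩, ⟨s i, hsi, Finset.inter_subset_right⟩⟩
  obtain ⟨⟨a, ha, hPa⟩, ⟨b, hb, hPb⟩⟩ := hMw ▸ hPM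
  refine ⟨_, hP, hPM, f₁ 1, f₂ a, (Δ.mem_Ch_genBy_iff hf₁).2 ⟨1, h1, rfl⟩,
    Finset.inter_subset_left, (Δ.mem_Ch_genBy_iff hf₂).2 ⟨a, ha, rfl⟩, hPa, fun h => ?_⟩
  -- Otherwise the apartment has no chamber at Weyl distance `s i` from `f₁ 1`.
  obtain ⟨g, hg, hgA⟩ := hA
  obtain ⟨x, -, hx⟩ := (Δ.mem_Ch_genBy_iff hg).1
    (show f₁ 1 ∈ Δ.Ch (Δ.aptOf g) from hgA ▸ ⟨.inl ⟨1, h1, subset_rfl⟩, hf₁.1 1⟩)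
  have hE : g (x * s i) ∈ Δ.Ch (Δ.aptOf g) := (Δ.mem_Ch_genBy_iff hg).2 ⟨_, trivial, rfl⟩
  have hδE : Δ.delta (f₁ 1) (g (x * s i)) = s i := by rw [hx, hg.2]; group
  rw [← hgA] at hE
  rcases hE with ⟨hE₁ | hE₂, hE⟩
  · obtain ⟨w, hw, hw'⟩ := (Δ.mem_Ch_genBy_iff hf₁).1 ⟨hE₁, hE⟩
    rw [hw', hf₁.2, inv_one, one_mul] at hδE
    exact hw (hδE ▸ hsi)
  · obtain ⟨b', hb', hb''⟩ := (Δ.mem_Ch_genBy_iff hf₂).1 ⟨hE₂, hE⟩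
    have hδb := hf₁.delta_eq_of_panel_mem_wall hP hPM.2 h1 Finset.inter_subset_left (hf₂.1 b) hPb
      (fun h' => ha (hf₂.injective (h'.trans h) ▸ hb))
    rw [h, hf₂.2] at hδb
    rw [h, hb'', hf₂.2] at hδE
    simp only [inv_one, one_mul, mul_one] at hδb
    exact hb' (mul_left_cancel (hδb.trans hδE.symm) ▸ hb)

theorem isApartment_union_of_panel (h₁ : Δ.IsSimpleRootImage f₁ i α₁ Mw)
    (h₂ : Δ.IsSimpleRootImage f₂ j α₂ Mw) {P C₁ C₂ : Finset V} (hP : Δ.IsPanel P) (hPM : P ∈ Mw)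
    (hC₁ : C₁ ∈ Δ.Ch α₁) (hPC₁ : P ⊆ C₁) (hC₂ : C₂ ∈ Δ.Ch α₂) (hPC₂ : P ⊆ C₂)
    (hne : C₁ ≠ C₂) : Δ.IsApartment (α₁ ∪ α₂) := by
  classical
  obtain ⟨hf₁, rfl, rfl⟩ := h₁
  obtain ⟨hf₂, rfl, hMw⟩ := h₂
  obtain ⟨p, hp, rfl⟩ := (Δ.mem_Ch_genBy_iff hf₁).1 hC₁
  obtain ⟨q, hq, rfl⟩ := (Δ.mem_Ch_genBy_iff hf₂).1 hC₂
  have hpq := hf₁.delta_eq_of_panel_mem_wall hP hPM.2 hp hPC₁ (hf₂.1 q) hPC₂ hne.symm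
  have hqp := hf₂.delta_eq_of_panel_mem_wall hP (hMw ▸ hPM).2 hq hPC₂ (hf₁.1 p) hPC₁ hne
  have hp1 : ℓ (p⁻¹ * (s i * p)) = 1 := by
    obtain ⟨k, hk⟩ := Δ.exists_delta_eq_simple_of_panel hP (hf₁.1 p) (hf₂.1 q) hPC₁ hPC₂ hne
    rw [← hpq, hk, cs.length_simple]
  have hconj : p⁻¹ * s i * p = q⁻¹ * s j * q := by
    rw [Δ.delta_inv, hpq] at hqp
    simpa [mul_assoc] using hqp
  -- Translating the second apartment by `q * p⁻¹ * s i` puts the second root opposite the first.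
  have hpre : (q * p⁻¹ * s i * ·) ⁻¹' {w | ¬cs.IsLeftDescent w j} = {w | cs.IsLeftDescent w i} := by
    ext v
    simp [cs.isLeftDescent_mul_iff_not_of_conj hp hq hconj]
  have hcompl : {w | ¬cs.IsLeftDescent w i}ᶜ = {w | cs.IsLeftDescent w i} := by
    ext
    simp
  have hf₂' := hf₂.comp_mul_left (q * p⁻¹ * s i)
  have hanchor : Δ.delta (f₁ p) (f₂ (q * p⁻¹ * s i * (s i * p))) = p⁻¹ * (s i * p) := by
    rwa [show q * p⁻¹ * s i * (s i * p) = q by simp [mul_assoc]]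
  have hwall : Δ.genBy f₁ {w | ¬cs.IsLeftDescent w i} ∩ Δ.genBy f₁ {w | cs.IsLeftDescent w i} ⊆
      Δ.genBy (fun v => f₂ (q * p⁻¹ * s i * v)) {w | cs.IsLeftDescent w i} := by
    rw [hMw, ← hpre, genBy_comp_mul_left]
    exact Set.inter_subset_left
  refine ⟨_, hf₁.piecewise hf₂' fun y hy hy1 =>
    hf₁.delta_apply_simple_mul_eq hf₂' hwall hp hp1 hanchor hy hy1, ?_⟩
  rw [aptOf_piecewise, hcompl, ← hpre, genBy_comp_mul_left]

end IsSimpleRootImage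

end Building

/-- Let `α₁`, `α₂` be two roots of a finite-dimensional
building `Δ` having the same wall `Mw` as their boundary. Then `α₁ ∪ α₂` is
an apartment of `Δ` (in the complete apartment system) if and only if there
is a panel `P ∈ Mw` such that the chamber of `α₁` containing `P` differs from
the chamber of `α₂` containing `P`. -/
theorem statement_11 {B W V : Type*} [Group W] [DecidableEq V]
    {M : CoxeterMatrix B} {cs : CoxeterSystem M W} (Δ : Building cs V)
    (α₁ α₂ Mw : Set (Finset V))
    (h₁ : Δ.IsRootWithWall α₁ Mw) (h₂ : Δ.IsRootWithWall α₂ Mw) :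
    Δ.IsApartment (α₁ ∪ α₂) ↔
      ∃ P : Finset V, Δ.IsPanel P ∧ P ∈ Mw ∧
        ∃ C₁ C₂ : Finset V, C₁ ∈ Δ.Ch α₁ ∧ P ⊆ C₁ ∧
          C₂ ∈ Δ.Ch α₂ ∧ P ⊆ C₂ ∧ C₁ ≠ C₂ := by
  obtain ⟨f₁, i, h₁⟩ := h₁.exists_isSimpleRootImage
  obtain ⟨f₂, j, h₂⟩ := h₂.exists_isSimpleRootImage
  refine ⟨h₁.exists_panel_of_isApartment_union h₂, ?_⟩
  rintro ⟨P, hP, hPM, C₁, C₂, hC₁, hPC₁, hC₂, hPC₂, hne⟩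
  exact h₁.isApartment_union_of_panel h₂ hP hPM hC₁ hPC₁ hC₂ hPC₂ hne

end IntersectionsOfApartments
end
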